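/- arXiv:2407.19767 — 11 statements merged into one kernel-verified Lean document; each statement's English description precedes it below -/
import Mathlib

section
/- For n ≥ 1 and real numbers x_1,...,x_n such that all the partial denominators F^{(i)}(x_1,...,x_i) for 1 ≤ i ≤ n-1 are nonzero, the continued fraction 1 - x_n/(1 - x_{n-1}/(1 - x_{n-2}/(⋯ - x_2/(1-x_1)))) equals F^{(n)}(x_1,...,x_n) / F^{(n-1)}(x_1,...,x_{n-1}). -/
/-- `Fsum n x` is the polynomial `F^{(n)}(x_1,...,x_n)`, the sum over subsets
`A ⊆ {1,...,n}` with no two elements `i,j` satisfying `|i-j| = 1`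
of `(-1)^|A| ∏_{i∈A} x_i`; `Fsum 0 x = 1`. -/
noncomputable def Fsum (n : ℕ) (x : ℕ → ℝ) : ℝ :=
  ∑ A ∈ (Finset.Icc 1 n).powerset.filter
      (fun A => ∀ i ∈ A, ∀ j ∈ A, i ≠ j → 2 ≤ Nat.dist i j),
    (-1 : ℝ) ^ A.card * ∏ i ∈ A, x i

/-- The continued fraction `C_k`: `C_0 = 1`, `C_k = 1 - x_k / C_{k-1}`.
So `C_1 = 1 - x_1` and `C_n = 1 - x_n/(1 - x_{n-1}/(⋯ - x_2/(1 - x_1)))`. -/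
noncomputable def contFrac : ℕ → (ℕ → ℝ) → ℝ
  | 0, _ => 1
  | (n + 1), x => 1 - x (n + 1) / contFrac n x

def good (n : ℕ) : Finset (Finset ℕ) :=
  (Finset.Icc 1 n).powerset.filter
      (fun A => ∀ i ∈ A, ∀ j ∈ A, i ≠ j → 2 ≤ Nat.dist i j)

lemma Fsum_eq (n : ℕ) (x : ℕ → ℝ) :
    Fsum n x = ∑ A ∈ good n, (-1 : ℝ) ^ A.card * ∏ i ∈ A, x i := rfl

lemma good_mem {n : ℕ} {A : Finset ℕ} :
    A ∈ good n ↔ A ⊆ Finset.Icc 1 n ∧ ∀ i ∈ A, ∀ j ∈ A, i ≠ j → 2 ≤ Nat.dist i j := by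
  simp [good]

lemma Fsum_zero (x : ℕ → ℝ) : Fsum 0 x = 1 := by
  simp [Fsum, Finset.filter_singleton]

lemma Fsum_succ (n : ℕ) (x : ℕ → ℝ) :
    Fsum (n + 1) x = Fsum n x - x (n + 1) * Fsum (n - 1) x := by
  rw [Fsum_eq, ← Finset.sum_filter_add_sum_filter_not (good (n+1)) (fun A => (n+1) ∈ A)]
  have h2 : (good (n+1)).filter (fun A => ¬ (n+1) ∈ A) = good n := by
    ext A
    simp only [Finset.mem_filter, good_mem]
    constructor
    · rintro ⟨⟨hsub, hcond⟩, hmem⟩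
      refine ⟨fun i hi => ?_, hcond⟩
      have := hsub hi
      simp only [Finset.mem_Icc] at this ⊢
      have : i ≠ n + 1 := fun h => hmem (h ▸ hi)
      omega
    · rintro ⟨hsub, hcond⟩
      have hnot : (n+1) ∉ A := fun h => by
        have := hsub h; simp only [Finset.mem_Icc] at this; omega
      exact ⟨⟨fun i hi => by
        have := hsub hi; simp only [Finset.mem_Icc] at this ⊢; omega, hcond⟩, hnot⟩
  have h1 : ∑ A ∈ (good (n+1)).filter (fun A => (n+1) ∈ A),
      ((-1 : ℝ) ^ A.card * ∏ i ∈ A, x i)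
      = ∑ B ∈ good (n-1), (-(x (n+1)) * ((-1 : ℝ) ^ B.card * ∏ i ∈ B, x i)) := by
    refine Finset.sum_nbij' (fun A => A.erase (n+1)) (fun B => insert (n+1) B) ?_ ?_ ?_ ?_ ?_
    · intro A hA
      simp only [Finset.mem_filter, good_mem] at hA
      obtain ⟨⟨hsub, hcond⟩, hmem⟩ := hA
      rw [good_mem]
      constructor
      · intro i hi
        rw [Finset.mem_erase] at hi
        have h1 := hsub hi.2
        simp only [Finset.mem_Icc] at h1 ⊢
        have := hcond i hi.2 (n+1) hmem hi.1
        simp [Nat.dist] at this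
        omega
      · intro i hi j hj hij
        exact hcond i (Finset.mem_of_mem_erase hi) j (Finset.mem_of_mem_erase hj) hij
    · intro B hB
      rw [good_mem] at hB
      obtain ⟨hsub, hcond⟩ := hB
      have hnot : (n+1) ∉ B := fun h => by
        have := hsub h; simp only [Finset.mem_Icc] at this; omega
      simp only [Finset.mem_filter, good_mem]
      refine ⟨⟨?_, ?_⟩, Finset.mem_insert_self _ _⟩
      · intro i hi
        rw [Finset.mem_insert] at hi
        rcases hi with rfl | hi
        · simp [Finset.mem_Icc]
        · have := hsub hi; simp only [Finset.mem_Icc] at this ⊢; omega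
      · intro i hi j hj hij
        rw [Finset.mem_insert] at hi hj
        rcases hi with rfl | hi <;> rcases hj with rfl | hj
        · omega
        · have := hsub hj; simp only [Finset.mem_Icc] at this; simp [Nat.dist]; omega
        · have := hsub hi; simp only [Finset.mem_Icc] at this; simp [Nat.dist]; omega
        · exact hcond i hi j hj hij
    · intro A hA
      simp only [Finset.mem_filter] at hA
      exact Finset.insert_erase hA.2
    · intro B hB
      rw [good_mem] at hB
      have hnot : (n+1) ∉ B := fun h => by
        have := hB.1 h; simp only [Finset.mem_Icc] at this; omega
      exact Finset.erase_insert hnot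
    · intro A hA
      simp only [Finset.mem_filter] at hA
      have hmem := hA.2
      have hcard : A.card = (A.erase (n+1)).card + 1 := by
        rw [Finset.card_erase_of_mem hmem]
        have : 1 ≤ A.card := Finset.card_pos.mpr ⟨_, hmem⟩
        omega
      have hprod : ∏ i ∈ A, x i = x (n+1) * ∏ i ∈ A.erase (n+1), x i :=
        (Finset.mul_prod_erase A x hmem).symm
      rw [hcard, hprod]
      ring
  rw [h2, h1, ← Finset.mul_sum, ← Fsum_eq, ← Fsum_eq]
  ring

/-- For `n ≥ 1`, if the partial denominators `F^{(i)}(x_1,...,x_i)` are nonzero for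
`1 ≤ i ≤ n-1`, then
`1 - x_n/(1 - x_{n-1}/(⋯ - x_2/(1 - x_1))) = F^{(n)}(x_1,...,x_n) / F^{(n-1)}(x_1,...,x_{n-1})`. -/
theorem contFrac_eq_Fsum_div (n : ℕ) (hn : 1 ≤ n) (x : ℕ → ℝ)
    (hne : ∀ i, 1 ≤ i → i ≤ n - 1 → Fsum i x ≠ 0) :
    contFrac n x = Fsum n x / Fsum (n - 1) x := by
  induction n, hn using Nat.le_induction with
  | base =>
      have h1 : Fsum 1 x = 1 - x 1 := by
        rw [Fsum_succ 0 x]; simp [Fsum_zero]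
      simp [contFrac, h1, Fsum_zero]
  | succ n hn ih =>
      have hFn : Fsum n x ≠ 0 := hne n hn (by omega)
      have hFn1 : Fsum (n - 1) x ≠ 0 := by
        rcases Nat.lt_or_ge n 2 with h | h
        · interval_cases n
          · simp [Fsum_zero]
        · exact hne (n - 1) (by omega) (by omega)
      have ihx := ih (fun i h1 h2 => hne i h1 (by omega))
      show 1 - x (n + 1) / contFrac n x = Fsum (n + 1) x / Fsum (n + 1 - 1) x
      rw [ihx, Fsum_succ n x]
      simp only [Nat.add_sub_cancel]
      field_simp
end

section
/- For d = 4: a sequence of real numbers satisfying a_{i+3} = 1 - a_{i+2}/(1 - a_{i+1}/(1 - a_i)) (with all relevant denominators nonzero) is 6-periodic: a_{i+6} = a_i for all i. -/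
/-!
With `T(x, y, z) = 1 - z (1 - x) / (1 - x - y)` the recurrence reads `a_{i+3} = T(a_i, a_{i+1}, a_{i+2})`,
and it is reversed by the same map: `a_i = T(a_{i+3}, a_{i+2}, a_{i+1})`. Two steps give the value
`a_{i+4} = a_i a_{i+1} a_{i+2} / ((1 - a_i - a_{i+1}) (1 - a_{i+1} - a_{i+2}))`, symmetric under
`a_i ↔ a_{i+2}`, and from it `a_{i+5} = T(a_{i+2}, a_{i+1}, a_i)`. Running the recurrence backwards
from `(a_{i+5}, a_{i+4}, a_{i+3})` reaches `a_i` in three steps; by the last identity these three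
steps also produce `T(a_{i+3}, a_{i+4}, a_{i+5}) = a_{i+6}`.
-/

section LynessStep

variable {K : Type*} [Field K] {x y z : K}

def lynessStep (x y z : K) : K := 1 - z * (1 - x) / (1 - x - y)

theorem one_sub_div_one_sub_div_eq_lynessStep (hx : 1 - x ≠ 0) :
    1 - z / (1 - y / (1 - x)) = lynessStep x y z := by
  rw [lynessStep, one_sub_div hx, div_div_eq_mul_div, sub_right_comm]

theorem one_sub_sub_lynessStep (hxy : 1 - x - y ≠ 0) :
    1 - z - lynessStep x y z = y * z / (1 - x - y) := by
  rw [lynessStep]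
  field_simp
  ring

theorem lynessStep_lynessStep (hxy : 1 - x - y ≠ 0) (hyz : 1 - y - z ≠ 0) :
    lynessStep y z (lynessStep x y z) = x * y * z / ((1 - x - y) * (1 - y - z)) := by
  simp only [lynessStep]
  field_simp
  ring

theorem mul_ne_zero_of_one_sub_sub_lynessStep_ne_zero (hxy : 1 - x - y ≠ 0)
    (h : 1 - z - lynessStep x y z ≠ 0) : y * z ≠ 0 := by
  rw [one_sub_sub_lynessStep hxy] at h
  exact (div_ne_zero_iff.mp h).1

theorem lynessStep_lynessStep_reverse (hxy : 1 - x - y ≠ 0) (h : 1 - z - lynessStep x y z ≠ 0) :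
    lynessStep (lynessStep x y z) z y = x := by
  obtain ⟨hy, hz⟩ := mul_ne_zero_iff.mp (mul_ne_zero_of_one_sub_sub_lynessStep_ne_zero hxy h)
  rw [lynessStep, sub_right_comm, one_sub_sub_lynessStep hxy, lynessStep, sub_sub_cancel]
  field_simp
  ring

theorem lynessStep_lynessStep_lynessStep (hxy : 1 - x - y ≠ 0) (hyz : 1 - y - z ≠ 0)
    (h : 1 - z - lynessStep x y z ≠ 0) :
    lynessStep z (lynessStep x y z) (lynessStep y z (lynessStep x y z)) = lynessStep z y x := by
  obtain ⟨hy, hz⟩ := mul_ne_zero_iff.mp (mul_ne_zero_of_one_sub_sub_lynessStep_ne_zero hxy h)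
  rw [lynessStep_lynessStep hxy hyz, lynessStep, one_sub_sub_lynessStep hxy, lynessStep,
    sub_right_comm 1 z y]
  field_simp

theorem lynessStep_periodic {a : ℕ → K} (hne : ∀ i, 1 - a i - a (i + 1) ≠ 0)
    (hrec : ∀ i, a (i + 3) = lynessStep (a i) (a (i + 1)) (a (i + 2))) (i : ℕ) :
    a (i + 6) = a i := by
  have hne' (j : ℕ) : 1 - a (j + 1) - a j ≠ 0 := by rw [sub_right_comm]; exact hne j
  have hrev (j : ℕ) : lynessStep (a (j + 3)) (a (j + 2)) (a (j + 1)) = a j := by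
    rw [hrec j]
    exact lynessStep_lynessStep_reverse (hne j) (hrec j ▸ hne (j + 2))
  calc a (i + 6) = lynessStep (a (i + 3)) (a (i + 4)) (a (i + 5)) := hrec (i + 3)
    _ = lynessStep (a (i + 3)) (a (i + 2)) (a (i + 1)) := by
      rw [← lynessStep_lynessStep_lynessStep (hne' (i + 4)) (hne' (i + 3))
        (by rw [hrev (i + 2)]; exact hne' (i + 2)), hrev (i + 2), hrev (i + 1)]
    _ = a i := hrev i

end LynessStep

/-- Case `d = 4`: a sequence of real numbers satisfying the depth-2 continued fraction
recurrence `a_{i+3} = 1 - a_{i+2}/(1 - a_{i+1}/(1 - a_i))`, with all relevant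
denominators nonzero (`1 - a_i ≠ 0` and `1 - a_i - a_{i+1} ≠ 0` for all `i ≥ 1`),
is `6`-periodic: `a_{i+6} = a_i` for all `i ≥ 1`. -/
theorem lyness_six_cycle (a : ℕ → ℝ)
    (hne1 : ∀ i, 1 ≤ i → 1 - a i ≠ 0)
    (hne2 : ∀ i, 1 ≤ i → 1 - a i - a (i + 1) ≠ 0)
    (hrec : ∀ i, 1 ≤ i → a (i + 3) = 1 - a (i + 2) / (1 - a (i + 1) / (1 - a i))) :
    ∀ i, 1 ≤ i → a (i + 6) = a i := by
  intro i hi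
  obtain ⟨j, rfl⟩ := Nat.exists_eq_add_of_le' hi
  refine lynessStep_periodic (a := fun n ↦ a (n + 1)) (fun n ↦ hne2 (n + 1) n.succ_pos)
    (fun n ↦ ?_) j
  rw [← one_sub_div_one_sub_div_eq_lynessStep (hne1 (n + 1) n.succ_pos)]
  exact hrec (n + 1) n.succ_pos
end

section
/- Let n ≥ 2 and suppose p_1,...,p_n ∈ ℝ^d are in good position. Let Q_{n-1} and Q_n denote the circumcenters of p_1,...,p_{n-1} and of p_1,...,p_n respectively. Then the line through p_n and Q_{n-1} is perpendicular to the affine span H(p_1,...,p_{n-1}), and Q_n lies on the half-line (ray) from p_n through Q_{n-1}. -/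
/-- `GoodPosition p a n`: the `n` points `p a, p (a+1), ..., p (a+n-1)` of `ℝ^d` are in
good position: they are affinely independent (in general position), and each point is
equidistant from all earlier ones (`|p_1 - p_i| = ⋯ = |p_{i-1} - p_i|`). -/
def GoodPosition {d : ℕ} (p : ℕ → EuclideanSpace ℝ (Fin d)) (a n : ℕ) : Prop :=
  AffineIndependent ℝ (fun i : Fin n => p (a + i)) ∧
  ∀ i j k : ℕ, i < n → j < i → k < i →
    dist (p (a + j)) (p (a + i)) = dist (p (a + k)) (p (a + i))

/-- `IsCircumcenter Q p a n`: `Q` is the circumcenter of the points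
`p a, ..., p (a+n-1)`, i.e. `Q` belongs to their affine span and is equidistant
from all of them (it is the center of the unique `(n-2)`-sphere through them
in their affine span). -/
def IsCircumcenter {d : ℕ} (Q : EuclideanSpace ℝ (Fin d))
    (p : ℕ → EuclideanSpace ℝ (Fin d)) (a n : ℕ) : Prop :=
  Q ∈ affineSpan ℝ (p '' Set.Ico a (a + n)) ∧ ∃ R : ℝ, ∀ i < n, dist Q (p (a + i)) = R

/-!
Two points equidistant from every point of a set `S` differ by a vector orthogonal to the
vector span of `S`; in particular a point of `affineSpan S` equidistant from `S` is unique.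
Applied to `p_n` and `Q_{n-1}` this gives the perpendicularity. For the ray, let
`w = Q_{n-1} - p_n`: since `p_i - Q_{n-1} ⟂ w`, every `p_i`, `i < n`, satisfies
`⟪p_i - p_n, w⟫ = ‖w‖²`, so the point `p_n + t w` with `t = |p_1 - p_n|² / (2‖w‖²) ≥ 0` is
equidistant from `p_1, …, p_n`; it lies in their affine span, hence it is `Q_n`.
-/

open Metric RealInnerProductSpace

section

variable {V P : Type*} [NormedAddCommGroup V] [InnerProductSpace ℝ V] [MetricSpace P]
  [NormedAddTorsor V P]

theorem inner_vsub_eq_zero_of_subset_sphere {S : Set P} {c₁ c₂ : P} {r₁ r₂ : ℝ}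
    (h₁ : S ⊆ sphere c₁ r₁) (h₂ : S ⊆ sphere c₂ r₂) {v : V} (hv : v ∈ vectorSpan ℝ S) :
    ⟪c₂ -ᵥ c₁, v⟫ = 0 := by
  suffices vectorSpan ℝ S ≤ (ℝ ∙ (c₂ -ᵥ c₁))ᗮ from
    Submodule.mem_orthogonal_singleton_iff_inner_right.1 (this hv)
  rw [vectorSpan_def, Submodule.span_le]
  rintro _ ⟨x, hx, y, hy, rfl⟩
  refine Submodule.mem_orthogonal_singleton_iff_inner_right.2
    (EuclideanGeometry.inner_vsub_vsub_of_dist_eq_of_dist_eq ?_ ?_)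
  · rw [mem_sphere.1 (h₁ hx), mem_sphere.1 (h₁ hy)]
  · rw [mem_sphere.1 (h₂ hx), mem_sphere.1 (h₂ hy)]

theorem eq_of_subset_sphere_of_mem_affineSpan {S : Set P} {c₁ c₂ : P} {r₁ r₂ : ℝ}
    (hc₁ : c₁ ∈ affineSpan ℝ S) (hc₂ : c₂ ∈ affineSpan ℝ S)
    (h₁ : S ⊆ sphere c₁ r₁) (h₂ : S ⊆ sphere c₂ r₂) : c₁ = c₂ := by
  have hv : c₂ -ᵥ c₁ ∈ vectorSpan ℝ S := by
    rw [← direction_affineSpan]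
    exact AffineSubspace.vsub_mem_direction hc₂ hc₁
  have := inner_vsub_eq_zero_of_subset_sphere h₁ h₂ hv
  exact (vsub_eq_zero_iff_eq.1 (inner_self_eq_zero.1 this)).symm

theorem dist_smul_vadd_eq_of_two_mul_inner_eq {a x : P} {w : V} {t : ℝ}
    (h : 2 * t * ⟪x -ᵥ a, w⟫ = dist x a ^ 2) :
    dist x (t • w +ᵥ a) = dist a (t • w +ᵥ a) := by
  rw [← sq_eq_sq₀ dist_nonneg dist_nonneg, dist_eq_norm_vsub V, dist_eq_norm_vsub V,
    vsub_vadd_eq_vsub_sub, vsub_vadd_eq_vsub_sub, vsub_self, zero_sub, norm_neg,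
    norm_sub_sq_real, inner_smul_right, ← dist_eq_norm_vsub V, ← h]
  ring

theorem exists_nonneg_vsub_eq_smul_of_subset_sphere {S : Set P} {a c₁ c : P} {ρ r₁ r : ℝ}
    (ha : S ⊆ sphere a ρ) (hc₁ : c₁ ∈ affineSpan ℝ S) (h₁ : S ⊆ sphere c₁ r₁)
    (hc : c ∈ affineSpan ℝ (insert a S)) (h : insert a S ⊆ sphere c r) :
    ∃ t : ℝ, 0 ≤ t ∧ c -ᵥ a = t • (c₁ -ᵥ a) := by
  have hS : S ⊆ sphere c r := (Set.subset_insert a S).trans h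
  by_cases hca : c₁ = a
  · -- then `a ∈ affineSpan S`, so `c` is also a center of `S` in `affineSpan S`
    subst hca
    rw [affineSpan_insert_eq_affineSpan ℝ hc₁] at hc
    refine ⟨0, le_rfl, ?_⟩
    rw [eq_of_subset_sphere_of_mem_affineSpan hc hc₁ hS h₁, vsub_self, zero_smul]
  set w := c₁ -ᵥ a
  set t := ρ ^ 2 / (2 * ‖w‖ ^ 2)
  have hw : ‖w‖ ≠ 0 := by simpa [w] using hca
  have hinner : ∀ x ∈ S, ⟪x -ᵥ a, w⟫ = ‖w‖ ^ 2 := by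
    intro x hx
    have hxc₁ : x -ᵥ c₁ ∈ vectorSpan ℝ S := by
      rw [← direction_affineSpan]
      exact AffineSubspace.vsub_mem_direction (mem_affineSpan ℝ hx) hc₁
    rw [← vsub_add_vsub_cancel x c₁ a, inner_add_left, real_inner_comm,
      inner_vsub_eq_zero_of_subset_sphere ha h₁ hxc₁, zero_add, real_inner_self_eq_norm_sq]
  have hmem : t • w +ᵥ a ∈ affineSpan ℝ (insert a S) :=
    AffineSubspace.smul_vsub_vadd_mem _ t (affineSpan_mono ℝ (Set.subset_insert a S) hc₁)
      (mem_affineSpan ℝ (Set.mem_insert a S)) (mem_affineSpan ℝ (Set.mem_insert a S))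
  have hsphere : insert a S ⊆ sphere (t • w +ᵥ a) (dist a (t • w +ᵥ a)) := by
    rintro x (rfl | hx)
    · exact mem_sphere.2 rfl
    · refine mem_sphere.2 (dist_smul_vadd_eq_of_two_mul_inner_eq ?_)
      rw [hinner x hx, mem_sphere.1 (ha hx)]
      simp only [t]
      field_simp
  refine ⟨t, by positivity, ?_⟩
  rw [eq_of_subset_sphere_of_mem_affineSpan hc hmem h hsphere, vadd_vsub]

end

theorem GoodPosition.image_subset_sphere {d a m : ℕ} {p : ℕ → EuclideanSpace ℝ (Fin d)}
    (h : GoodPosition p a (m + 1)) :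
    p '' Set.Ico a (a + m) ⊆ sphere (p (a + m)) (dist (p a) (p (a + m))) := by
  rintro _ ⟨i, hi, rfl⟩
  rw [Set.mem_Ico] at hi
  obtain ⟨k, rfl⟩ := Nat.exists_eq_add_of_le hi.1
  exact mem_sphere.2 (h.2 m k 0 (by omega) (by omega) (by omega))

theorem IsCircumcenter.image_subset_sphere {d a n : ℕ} {p : ℕ → EuclideanSpace ℝ (Fin d)}
    {Q : EuclideanSpace ℝ (Fin d)} (h : IsCircumcenter Q p a n) :
    ∃ R, p '' Set.Ico a (a + n) ⊆ sphere Q R := by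
  obtain ⟨-, R, hR⟩ := h
  refine ⟨R, ?_⟩
  rintro _ ⟨i, hi, rfl⟩
  rw [Set.mem_Ico] at hi
  obtain ⟨k, rfl⟩ := Nat.exists_eq_add_of_le hi.1
  exact mem_sphere.2 ((dist_comm _ _).trans (hR k (by omega)))

/-- Let `n ≥ 2` and let `p_1, ..., p_n ∈ ℝ^d` be in good position. Let `Q_{n-1}` and
`Q_n` be the circumcenters of `p_1, ..., p_{n-1}` and of `p_1, ..., p_n` respectively.
Then the line through `p_n` and `Q_{n-1}` is perpendicular to the affine span
`H(p_1, ..., p_{n-1})` (i.e. `Q_{n-1} - p_n` is orthogonal to all differences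
`p_i - p_j`, `i, j ≤ n-1`), and `Q_n` lies on the ray from `p_n` through `Q_{n-1}`. -/
theorem circumcenter_on_ray (d n : ℕ) (hn : 2 ≤ n)
    (p : ℕ → EuclideanSpace ℝ (Fin d))
    (hgood : GoodPosition p 1 n)
    (Q1 Qn : EuclideanSpace ℝ (Fin d))
    (hQ1 : IsCircumcenter Q1 p 1 (n - 1))
    (hQn : IsCircumcenter Qn p 1 n) :
    (∀ i j, 1 ≤ i → i ≤ n - 1 → 1 ≤ j → j ≤ n - 1 →
      (inner ℝ (Q1 - p n) (p i - p j) : ℝ) = 0) ∧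
    (∃ t : ℝ, 0 ≤ t ∧ Qn - p n = t • (Q1 - p n)) := by
  obtain ⟨m, rfl⟩ : ∃ m, n = 1 + m := ⟨n - 1, by omega⟩
  rw [Nat.add_sub_cancel_left] at hQ1 ⊢
  set S := p '' Set.Ico 1 (1 + m)
  have hpS : S ⊆ sphere (p (1 + m)) (dist (p 1) (p (1 + m))) :=
    (Nat.add_comm 1 m ▸ hgood).image_subset_sphere
  obtain ⟨r₁, hQ1S⟩ := hQ1.image_subset_sphere
  obtain ⟨r, hQnS⟩ := hQn.image_subset_sphere
  have hinsert : p '' Set.Ico 1 (1 + (1 + m)) = insert (p (1 + m)) S := by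
    rw [← Set.image_insert_eq, Set.insert_Ico_right_eq_Ico_add_one (by omega),
      Nat.add_comm 1 (1 + m)]
  rw [hinsert] at hQnS
  refine ⟨fun i j hi hi' hj hj' => ?_, ?_⟩
  · exact inner_vsub_eq_zero_of_subset_sphere hpS hQ1S
      (vsub_mem_vectorSpan ℝ ⟨i, ⟨hi, by omega⟩, rfl⟩ ⟨j, ⟨hj, by omega⟩, rfl⟩)
  · exact exists_nonneg_vsub_eq_smul_of_subset_sphere hpS hQ1.1 hQ1S (hinsert ▸ hQn.1) hQnS
end

section
/- Let n ≥ 2 and p_1,...,p_n ∈ ℝ^d in good position, with b_i = |p_i - p_{i+1}| and a_i = b_i²/(4 b_{i+1}²). Let R_n be the circumradius of p_1,...,p_n. Then R_n² = (b_{n-1}²/4) / (1 - a_{n-2}/(1 - a_{n-3}/(⋯ - a_2/(1 - a_1)))). Equivalently, R_n² = (b_{n-1}²/4) · F^{(n-3)}(a_1,...,a_{n-3}) / F^{(n-2)}(a_1,...,a_{n-2}). -/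
/-- The polynomial `F^{(n)}`, defined by the recurrence
`F^{(n)}(x_1,...,x_n) = F^{(n-1)}(x_1,...,x_{n-1}) - x_n F^{(n-2)}(x_1,...,x_{n-2})`
with `F^{(0)} = F^{(-1)} = 1`. -/
def Frec : ℕ → (ℕ → ℝ) → ℝ
  | 0, _ => 1
  | 1, x => 1 - x 1
  | (n + 2), x => Frec (n + 1) x - x (n + 2) * Frec n x

open EuclideanGeometry

theorem Frec_succ (m : ℕ) (x : ℕ → ℝ) :
    Frec (m + 1) x = Frec m x - x (m + 1) * Frec (m - 1) x := by
  cases m with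
  | zero => simp [Frec]
  | succ k => rfl

noncomputable def edgeRatio {X : Type*} [Dist X] (p : ℕ → X) (i : ℕ) : ℝ :=
  dist (p i) (p (i + 1)) ^ 2 / (4 * dist (p (i + 1)) (p (i + 2)) ^ 2)

theorem range_shift_eq_image_Icc {α : Type*} (p : ℕ → α) (n : ℕ) :
    Set.range (fun i : Fin n => p (1 + i)) = p '' Set.Icc 1 n := by
  ext y
  constructor
  · rintro ⟨i, rfl⟩
    exact ⟨1 + i, ⟨by omega, by omega⟩, rfl⟩
  · rintro ⟨j, ⟨hj₁, hj₂⟩, rfl⟩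
    exact ⟨⟨j - 1, by omega⟩, congrArg p (show 1 + (j - 1) = j by omega)⟩

theorem range_shift_succ {α : Type*} (p : ℕ → α) (k : ℕ) :
    Set.range (fun i : Fin (k + 1) => p (1 + i)) =
      insert (p (k + 1)) (Set.range fun i : Fin k => p (1 + i)) := by
  have : (fun i : Fin (k + 1) => p (1 + i)) =
      Fin.snoc (α := fun _ => α) (fun i : Fin k => p (1 + i)) (p (k + 1)) := by
    funext i
    refine Fin.lastCases ?_ (fun j => ?_) i <;> simp [add_comm]
  rw [this, Fin.range_snoc]

namespace Affine.Simplex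

variable {V P : Type*} [NormedAddCommGroup V] [InnerProductSpace ℝ V] [MetricSpace P]
  [NormedAddTorsor V P] {n : ℕ} (F : Simplex ℝ P n) {a : P} {b : ℝ}

theorem dist_circumcenter_sq_of_dist_eq (hab : ∀ i, dist (F.points i) a = b) :
    dist a F.circumcenter ^ 2 = b ^ 2 - F.circumradius ^ 2 := by
  simp only [sq]
  exact F.dist_circumcenter_sq_eq_sq_sub_circumradius hab
    (F.orthogonalProjection_eq_circumcenter_of_dist_eq hab) (mem_affineSpan ℝ ⟨0, rfl⟩)

theorem circumradius_sq_lt_of_dist_eq (hab : ∀ i, dist (F.points i) a = b)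
    (ha : a ∉ affineSpan ℝ (Set.range F.points)) : F.circumradius ^ 2 < b ^ 2 := by
  have hpos : 0 < dist a F.circumcenter :=
    dist_pos.mpr fun h => ha (h ▸ F.circumcenter_mem_affineSpan)
  nlinarith [F.dist_circumcenter_sq_of_dist_eq hab]

theorem four_mul_sq_mul_sub_circumradius_sq {Q : P} {R : ℝ}
    (hab : ∀ i, dist (F.points i) a = b)
    (hQ : Q ∈ affineSpan ℝ (insert a (Set.range F.points)))
    (hQF : ∀ i, dist (F.points i) Q = R) (hQa : dist a Q = R) :
    4 * R ^ 2 * (b ^ 2 - F.circumradius ^ 2) = b ^ 4 := by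
  have hc := F.circumcenter_mem_affineSpan
  have h0 : F.points 0 ∈ affineSpan ℝ (Set.range F.points) := mem_affineSpan ℝ ⟨0, rfl⟩
  have hca : ↑(F.orthogonalProjectionSpan a) = F.circumcenter :=
    F.orthogonalProjection_eq_circumcenter_of_dist_eq hab
  have hv : a -ᵥ F.circumcenter ∈ (affineSpan ℝ (Set.range F.points)).directionᗮ :=
    hca ▸ vsub_orthogonalProjection_mem_direction_orthogonal _ a
  rw [← affineSpan_insert_affineSpan, AffineSubspace.mem_affineSpan_insert_iff hc] at hQ
  obtain ⟨r, q, hq, rfl⟩ := hQ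
  obtain rfl : q = F.circumcenter := by
    rw [← F.orthogonalProjection_eq_circumcenter_of_dist_eq hQF, ← hca,
      F.coe_orthogonalProjection_vadd_smul_vsub_orthogonalProjection hq]
  have hQ0 := dist_sq_smul_orthogonal_vadd_smul_orthogonal_vadd h0 hc 0 r hv
  have hQa' := dist_sq_smul_orthogonal_vadd_smul_orthogonal_vadd hc hc 1 r hv
  rw [zero_smul, zero_vadd, hQF, F.dist_circumcenter_eq_circumradius, ← dist_eq_norm_vsub V]
    at hQ0
  rw [one_smul, vsub_vadd, hQa, dist_self, ← dist_eq_norm_vsub] at hQa'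
  simp only [Real.norm_eq_abs, abs_mul_abs_self] at hQ0 hQa'
  have hh := F.dist_circumcenter_sq_of_dist_eq hab
  linear_combination -(4 * R ^ 2 - b ^ 2 - dist a F.circumcenter ^ 2 - F.circumradius ^ 2) * hh
    + 4 * dist a F.circumcenter ^ 2 * hQa' - 4 * (1 - r) * dist a F.circumcenter ^ 2 * (hQa' - hQ0)
    - (F.circumradius ^ 2 - (1 - 2 * r) * dist a F.circumcenter ^ 2) * (hQa' - hQ0)

end Affine.Simplex

namespace GoodPosition

variable {d : ℕ} {p : ℕ → EuclideanSpace ℝ (Fin d)}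

theorem mono {a m n : ℕ} (h : GoodPosition p a n) (hmn : m ≤ n) : GoodPosition p a m :=
  ⟨h.1.comp_embedding (Fin.castLEEmb hmn), fun i j k hi => h.2 i j k (hi.trans_le hmn)⟩

noncomputable def simplex {k : ℕ} (h : GoodPosition p 1 (k + 1)) :
    Affine.Simplex ℝ (EuclideanSpace ℝ (Fin d)) k :=
  ⟨_, h.1⟩

theorem simplex_points_last {k : ℕ} (h : GoodPosition p 1 (k + 2)) :
    h.simplex.points (Fin.last (k + 1)) = p (k + 2) := by
  show p (1 + ↑(Fin.last (k + 1))) = p (k + 2)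
  rw [Fin.val_last, add_comm]

theorem dist_apex {k : ℕ} (h : GoodPosition p 1 (k + 2)) (i : Fin (k + 1)) :
    dist (p (1 + i)) (p (k + 2)) = dist (p (k + 1)) (p (k + 2)) := by
  have := h.2 (k + 1) i k (by omega) i.2 (by omega)
  rwa [show 1 + (k + 1) = k + 2 by omega, show 1 + k = k + 1 by omega] at this

theorem apex_notMem_affineSpan {k : ℕ} (h : GoodPosition p 1 (k + 2)) :
    p (k + 2) ∉ affineSpan ℝ (Set.range fun i : Fin (k + 1) => p (1 + i)) := by
  have := (h.1.mem_affineSpan_iff (Fin.last (k + 1)) (Set.range Fin.castSucc)).not.mpr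
    (by simp)
  rwa [Fin.val_last, show 1 + (k + 1) = k + 2 by omega, ← Set.range_comp] at this

theorem circumradius_succ {k : ℕ} (h : GoodPosition p 1 (k + 2)) :
    (h.mono (Nat.le_succ _)).simplex.circumradius ^ 2 < dist (p (k + 1)) (p (k + 2)) ^ 2 ∧
      4 * h.simplex.circumradius ^ 2 *
        (dist (p (k + 1)) (p (k + 2)) ^ 2 - (h.mono (Nat.le_succ _)).simplex.circumradius ^ 2) =
        dist (p (k + 1)) (p (k + 2)) ^ 4 := by
  have hab := h.dist_apex
  refine ⟨Affine.Simplex.circumradius_sq_lt_of_dist_eq _ hab h.apex_notMem_affineSpan,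
    Affine.Simplex.four_mul_sq_mul_sub_circumradius_sq _ hab ?_
      (fun i => h.simplex.dist_circumcenter_eq_circumradius i.castSucc)
      (h.simplex_points_last ▸ h.simplex.dist_circumcenter_eq_circumradius (Fin.last _))⟩
  have := h.simplex.circumcenter_mem_affineSpan
  rwa [simplex, range_shift_succ] at this

-- At `m = 0`, the truncated `Frec (0 - 1) = Frec 0 = 1` plays the role of `F^{(-1)}`.
theorem circumradius_sq_mul_Frec : ∀ (m : ℕ) (h : GoodPosition p 1 (m + 2)),
    0 < Frec m (edgeRatio p) ∧
      h.simplex.circumradius ^ 2 * Frec m (edgeRatio p) =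
        dist (p (m + 1)) (p (m + 2)) ^ 2 / 4 * Frec (m - 1) (edgeRatio p)
  | 0, h => by
    obtain ⟨hlt, hR⟩ := h.circumradius_succ
    have hb : 0 < dist (p 1) (p 2) ^ 2 := (sq_nonneg _).trans_lt hlt
    have h0 : (h.mono (Nat.le_succ _)).simplex.circumradius = 0 := by
      rw [← Affine.Simplex.dist_circumcenter_eq_circumradius _ 0,
        Affine.Simplex.circumcenter_eq_point, dist_self]
    rw [h0] at hR
    refine ⟨one_pos, ?_⟩
    simp only [Frec, Nat.zero_sub, mul_one]
    apply mul_right_cancel₀ hb.ne'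
    linear_combination hR / 4
  | m + 1, h => by
    obtain ⟨hlt, hR⟩ := h.circumradius_succ
    simp only [show m + 1 + 1 = m + 2 from rfl, show m + 1 + 2 = m + 3 from rfl] at hlt hR ⊢
    obtain ⟨hpos, hF⟩ := circumradius_sq_mul_Frec m (h.mono (Nat.le_succ _))
    have hb : 0 < dist (p (m + 2)) (p (m + 3)) ^ 2 := (sq_nonneg _).trans_lt hlt
    have hb' : dist (p (m + 2)) (p (m + 3)) ≠ 0 :=
      (pow_ne_zero_iff two_ne_zero).mp hb.ne'
    have hrec : Frec (m + 1) (edgeRatio p) = Frec m (edgeRatio p) *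
        (dist (p (m + 2)) (p (m + 3)) ^ 2 - (h.mono (Nat.le_succ _)).simplex.circumradius ^ 2) /
          dist (p (m + 2)) (p (m + 3)) ^ 2 := by
      rw [Frec_succ, edgeRatio]
      field_simp
      linear_combination 4 * hF
    rw [Nat.add_sub_cancel, hrec]
    refine ⟨div_pos (mul_pos hpos (sub_pos.2 hlt)) hb, ?_⟩
    field_simp
    linear_combination hR

end GoodPosition

/-- Let `n ≥ 2` and `p_1, ..., p_n ∈ ℝ^d` in good position, with `b_i = |p_i - p_{i+1}|`
and `a_i = b_i²/(4 b_{i+1}²)`. Let `R_n` be the circumradius of `p_1, ..., p_n`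
(the radius of the unique `(n-2)`-sphere through them in their affine span, whose
center `Q` lies in the affine span).  Then
`R_n² = (b_{n-1}²/4) · F^{(n-3)}(a_1,...,a_{n-3}) / F^{(n-2)}(a_1,...,a_{n-2})`,
which is the closed form of the continued fraction
`R_n² = (b_{n-1}²/4) / (1 - a_{n-2}/(1 - a_{n-3}/(⋯ - a_2/(1 - a_1))))`. -/
theorem circumradius_formula (d n : ℕ) (hn : 2 ≤ n)
    (p : ℕ → EuclideanSpace ℝ (Fin d))
    (hgood : GoodPosition p 1 n)
    (Q : EuclideanSpace ℝ (Fin d)) (R : ℝ)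
    (hQ : Q ∈ affineSpan ℝ (p '' Set.Icc 1 n))
    (hR : ∀ i, 1 ≤ i → i ≤ n → dist Q (p i) = R) :
    R ^ 2 = (dist (p (n - 1)) (p n)) ^ 2 / 4 *
      Frec (n - 3) (fun i => dist (p i) (p (i + 1)) ^ 2 / (4 * dist (p (i + 1)) (p (i + 2)) ^ 2)) /
      Frec (n - 2) (fun i => dist (p i) (p (i + 1)) ^ 2 / (4 * dist (p (i + 1)) (p (i + 2)) ^ 2)) := by
  obtain ⟨m, rfl⟩ : ∃ m, n = m + 2 := ⟨n - 2, by omega⟩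
  have hRS : R = hgood.simplex.circumradius := by
    refine hgood.simplex.eq_circumradius_of_dist_eq (p := Q) ?_ fun i => ?_
    · rwa [GoodPosition.simplex, range_shift_eq_image_Icc]
    · rw [dist_comm]
      exact hR _ (by omega) (by omega)
  obtain ⟨hpos, heq⟩ := hgood.circumradius_sq_mul_Frec m
  show R ^ 2 = dist (p (m + 1)) (p (m + 2)) ^ 2 / 4 * Frec (m - 1) (edgeRatio p) /
    Frec m (edgeRatio p)
  rw [eq_div_iff hpos.ne', hRS]
  exact heq
end

section
/- Let n ≥ 2 and p_1,...,p_n ∈ ℝ^d in good position, and let Q_n be the circumcenter of p_1,...,p_n. Then the closed segment from p_1 to Q_n is disjoint from the affine span H(p_2,...,p_n). In particular, the points p_2, p_3, ..., p_n, Q_n are in good position. -/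
open EuclideanGeometry Affine AffineMap

theorem AffineMap.apply_eq_of_mem_affineSpan {k V₁ P₁ V₂ P₂ : Type*} [Ring k] [AddCommGroup V₁]
    [Module k V₁] [AddTorsor V₁ P₁] [AddCommGroup V₂] [Module k V₂] [AddTorsor V₂ P₂]
    (f : P₁ →ᵃ[k] P₂) {s : Set P₁} {c : P₂} (hs : ∀ x ∈ s, f x = c) {y : P₁}
    (hy : y ∈ affineSpan k s) : f y = c := by
  have hfy : f y ∈ affineSpan k (f '' s) :=
    AffineSubspace.map_span f s ▸ AffineSubspace.mem_map_of_mem f hy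
  have hsub : f '' s ⊆ {c} := Set.image_subset_iff.mpr fun x hx => hs x hx
  exact (AffineSubspace.mem_affineSpan_singleton k V₂).mp (affineSpan_mono k hsub hfy)

theorem AffineIndependent.snoc {k V P : Type*} [DivisionRing k] [AddCommGroup V] [Module k V]
    [AddTorsor V P] {n : ℕ} {f : Fin n → P} (hf : AffineIndependent k f) {q : P}
    (hq : q ∉ affineSpan k (Set.range f)) :
    AffineIndependent k (Fin.snoc f q : Fin (n + 1) → P) := by
  refine AffineIndependent.affineIndependent_of_notMem_span (i := Fin.last n) ?_ ?_
  · rw [← affineIndependent_equiv (finSuccAboveEquiv (Fin.last n))]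
    convert hf
    ext i
    simp [finSuccAboveEquiv_apply]
  · have himage : (Fin.snoc f q : Fin (n + 1) → P) '' {x | x ≠ Fin.last n} = Set.range f := by
      rw [show {x | x ≠ Fin.last n} = Set.range Fin.castSucc from
        Set.ext fun _ => Fin.exists_castSucc_eq.symm, ← Set.range_comp, Fin.snoc_comp_castSucc]
    simpa [himage] using hq

def IsEquidistantFromEarlier {P : Type*} [MetricSpace P] {n : ℕ} (f : Fin n → P) : Prop :=
  ∀ i j k : Fin n, j < i → k < i → dist (f j) (f i) = dist (f k) (f i)

namespace IsEquidistantFromEarlier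

variable {P : Type*} [MetricSpace P] {n : ℕ} {f : Fin n → P}

theorem comp_strictMono (hf : IsEquidistantFromEarlier f) {m : ℕ} {e : Fin m → Fin n}
    (he : StrictMono e) : IsEquidistantFromEarlier (f ∘ e) :=
  fun _ _ _ hj hk => hf _ _ _ (he hj) (he hk)

theorem snoc (hf : IsEquidistantFromEarlier f) {q : P} {R : ℝ} (hq : ∀ i, dist (f i) q = R) :
    IsEquidistantFromEarlier (Fin.snoc f q : Fin (n + 1) → P) := by
  intro i j k hj hk
  obtain ⟨j, rfl⟩ := Fin.exists_castSucc_eq.mpr (Fin.ne_last_of_lt hj)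
  obtain ⟨k, rfl⟩ := Fin.exists_castSucc_eq.mpr (Fin.ne_last_of_lt hk)
  induction i using Fin.lastCases with
  | last => simp [hq]
  | cast i =>
    simpa using hf i j k (Fin.castSucc_lt_castSucc_iff.mp hj) (Fin.castSucc_lt_castSucc_iff.mp hk)

end IsEquidistantFromEarlier

theorem goodPosition_iff {d : ℕ} {p : ℕ → EuclideanSpace ℝ (Fin d)} {a n : ℕ} :
    GoodPosition p a n ↔ AffineIndependent ℝ (fun i : Fin n => p (a + i)) ∧
      IsEquidistantFromEarlier (fun i : Fin n => p (a + i)) :=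
  and_congr_right fun _ =>
    ⟨fun h i j k hj hk => h i j k i.2 hj hk,
      fun h i j k hi hj hk => h ⟨i, hi⟩ ⟨j, hj.trans hi⟩ ⟨k, hk.trans hi⟩ hj hk⟩

theorem image_Icc_two_eq_range {α : Type*} (p : ℕ → α) (k : ℕ) :
    p '' Set.Icc 2 (k + 2) = Set.range fun i : Fin (k + 1) => p (1 + (i.succ : ℕ)) := by
  ext x
  constructor
  · rintro ⟨j, ⟨hj2, hjk⟩, rfl⟩
    exact ⟨⟨j - 2, by omega⟩, by simp only [Fin.val_succ]; congr 1; omega⟩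
  · rintro ⟨i, rfl⟩
    exact ⟨1 + (i.succ : ℕ), by simp; omega, rfl⟩

section Euclidean

variable {V P : Type*} [NormedAddCommGroup V] [InnerProductSpace ℝ V] [MetricSpace P]
  [NormedAddTorsor V P]

noncomputable def distSqSubDistSq (a b : P) : P →ᵃ[ℝ] ℝ where
  toFun x := dist x a ^ 2 - dist x b ^ 2
  linear := (2 : ℝ) • (innerSL ℝ (b -ᵥ a)).toLinearMap
  map_vadd' x v := by
    have hab : (x -ᵥ a) - (x -ᵥ b) = b -ᵥ a := vsub_sub_vsub_cancel_left b a x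
    simp only [dist_eq_norm_vsub V, vadd_vsub_assoc, norm_add_sq_real, LinearMap.smul_apply,
      ContinuousLinearMap.coe_coe, innerSL_apply_apply, smul_eq_mul, vadd_eq_add, ← hab,
      inner_sub_right, real_inner_comm v]
    ring

@[simp]
theorem distSqSubDistSq_apply (a b x : P) :
    distSqSubDistSq a b x = dist x a ^ 2 - dist x b ^ 2 :=
  rfl

theorem exists_eq_lineMap_of_orthogonalProjection_eq {S : AffineSubspace ℝ P} [Nonempty S]
    [S.direction.HasOrthogonalProjection] {q x : P} (hx : x ∈ affineSpan ℝ (insert q (S : Set P)))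
    (h : orthogonalProjection S x = orthogonalProjection S q) :
    ∃ r : ℝ, x = lineMap (orthogonalProjection S q : P) q r := by
  obtain ⟨r, y, hy, rfl⟩ :=
    (AffineSubspace.mem_affineSpan_insert_iff (orthogonalProjection_mem q) q x).mp hx
  refine ⟨r, ?_⟩
  rw [orthogonalProjection_vadd_smul_vsub_orthogonalProjection q r hy] at h
  rw [lineMap_apply, ← h]

namespace Affine.Simplex

theorem dist_circumcenter_sq_of_dist_eq_s10 {m : ℕ} (t : Simplex ℝ P m) {q : P} {R : ℝ}
    (hq : ∀ i, dist (t.points i) q = R) :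
    dist q t.circumcenter ^ 2 = R ^ 2 - t.circumradius ^ 2 := by
  simpa only [sq] using t.dist_circumcenter_sq_eq_sq_sub_circumradius hq
    (t.orthogonalProjection_eq_circumcenter_of_dist_eq hq)
    (mem_affineSpan ℝ (Set.mem_range_self 0))

theorem exists_circumcenter_eq_lineMap {m : ℕ} (s : Simplex ℝ P (m + 1)) {R : ℝ}
    (hR : ∀ i,
      dist ((s.faceOpposite (Fin.last (m + 1))).points i) (s.points (Fin.last (m + 1))) = R) :
    ∃ r ≤ (1 / 2 : ℝ), s.circumcenter =
      lineMap (s.faceOpposite (Fin.last (m + 1))).circumcenter (s.points (Fin.last (m + 1))) r := by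
  set t := s.faceOpposite (Fin.last (m + 1))
  set q := s.points (Fin.last (m + 1))
  have hq : (t.orthogonalProjectionSpan q : P) = t.circumcenter :=
    t.orthogonalProjection_eq_circumcenter_of_dist_eq hR
  have hmem :
      s.circumcenter ∈ affineSpan ℝ (insert q (affineSpan ℝ (Set.range t.points) : Set P)) := by
    rw [affineSpan_insert_affineSpan, range_faceOpposite_points, Set.insert_image_compl_eq_range]
    exact s.circumcenter_mem_affineSpan
  obtain ⟨r, hr⟩ := exists_eq_lineMap_of_orthogonalProjection_eq hmem
    (Subtype.ext ((s.orthogonalProjection_circumcenter _).trans hq.symm))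
  change s.circumcenter = lineMap (t.orthogonalProjectionSpan q : P) q r at hr
  rw [hq] at hr
  refine ⟨r, ?_, hr⟩
  have hqC : 0 < dist t.circumcenter q := dist_pos.mpr fun h =>
    s.points_notMem_affineSpan_faceOpposite _ (h ▸ t.circumcenter_mem_affineSpan)
  have hfar : dist s.circumcenter q = |1 - r| * dist t.circumcenter q := by
    rw [hr, dist_lineMap_right, Real.norm_eq_abs]
  have hnear : dist s.circumcenter t.circumcenter = |r| * dist t.circumcenter q := by
    rw [hr, dist_lineMap_left, Real.norm_eq_abs]
  have hpyth := t.dist_circumcenter_sq_of_dist_eq_s10 (q := s.circumcenter) (R := s.circumradius)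
    fun i => by
      obtain ⟨j, -, hj⟩ := (range_faceOpposite_points s _).subset (Set.mem_range_self i)
      rw [← hj, dist_comm, s.dist_circumcenter_eq_circumradius']
  have hsq : (|r| * dist t.circumcenter q) ^ 2 ≤ (|1 - r| * dist t.circumcenter q) ^ 2 := by
    rw [← hnear, ← hfar, hpyth, s.dist_circumcenter_eq_circumradius']
    nlinarith [sq_nonneg t.circumradius]
  rw [mul_pow, mul_pow, sq_abs, sq_abs] at hsq
  nlinarith [le_of_mul_le_mul_right hsq (pow_pos hqC 2)]

theorem apply_circumcenter_pos {m : ℕ} (s : Simplex ℝ P m)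
    (hs : IsEquidistantFromEarlier s.points) (g : P →ᵃ[ℝ] ℝ) (h0 : 0 < g (s.points 0))
    (hg : ∀ i ≠ 0, g (s.points i) = 0) : 0 < g s.circumcenter := by
  induction m with
  | zero => rwa [s.circumcenter_eq_point 0]
  | succ m ih =>
    set t := s.faceOpposite (Fin.last (m + 1))
    have ht : ∀ i, t.points i = s.points (Fin.castSucc i) := by
      simp [t, faceOpposite_point_eq_point_succAbove]
    have hlast : Fin.last (m + 1) ≠ 0 := (Fin.last_pos).ne'
    obtain ⟨r, hr, hc⟩ := s.exists_circumcenter_eq_lineMap fun i => by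
      rw [ht]
      exact hs _ _ 0 (Fin.castSucc_lt_last i) (Fin.pos_iff_ne_zero.mpr hlast)
    have hC : 0 < g t.circumcenter := by
      refine ih t ?_ (by rw [ht]; exact h0) fun i hi => ?_
      · rw [show t.points = s.points ∘ Fin.castSucc from funext ht]
        exact hs.comp_strictMono Fin.strictMono_castSucc
      · rw [ht]
        exact hg _ (Fin.castSucc_ne_zero_iff.mpr hi)
    rw [hc, apply_lineMap, hg _ hlast, lineMap_apply_module, smul_zero, add_zero, smul_eq_mul]
    nlinarith

theorem circumradius_faceOpposite_zero_lt_dist {m : ℕ} (s : Simplex ℝ P (m + 1))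
    (hs : IsEquidistantFromEarlier s.points) :
    (s.faceOpposite 0).circumradius < dist (s.points 0) (s.faceOpposite 0).circumcenter := by
  set t := s.faceOpposite 0
  have ht : ∀ i, t.points i = s.points (Fin.succ i) := by
    simp [t, faceOpposite_point_eq_point_succAbove]
  have h01 : s.points 0 ≠ s.points 1 := s.independent.injective.ne zero_ne_one
  have htower : IsEquidistantFromEarlier t.points := by
    rw [show t.points = s.points ∘ Fin.succ from funext ht]
    exact hs.comp_strictMono Fin.strictMono_succ
  have hpos := t.apply_circumcenter_pos htower (distSqSubDistSq (s.points 0) (s.points 1))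
    (by simpa [ht, dist_comm] using pow_pos (dist_pos.mpr h01) 2) fun i hi => by
      have h1i : (1 : Fin (m + 2)) < i.succ := by
        simpa using Fin.succ_lt_succ_iff.mpr (Fin.pos_iff_ne_zero.mpr hi)
      rw [ht, distSqSubDistSq_apply, dist_comm, hs _ 0 1 (Fin.succ_pos i) h1i, dist_comm, sub_self]
  rw [distSqSubDistSq_apply, show s.points 1 = t.points 0 by simp [ht],
    dist_circumcenter_eq_circumradius', sub_pos, dist_comm] at hpos
  exact lt_of_pow_lt_pow_left₀ 2 dist_nonneg hpos

end Affine.Simplex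

end Euclidean

theorem Affine.Simplex.segment_disjoint_affineSpan_faceOpposite_zero {E : Type*}
    [NormedAddCommGroup E] [InnerProductSpace ℝ E] {m : ℕ} (s : Simplex ℝ E (m + 1))
    (hs : IsEquidistantFromEarlier s.points) {Q : E} {R : ℝ} (hQ : ∀ i, dist (s.points i) Q = R) :
    ∀ x ∈ segment ℝ (s.points 0) Q, x ∉ affineSpan ℝ (Set.range (s.faceOpposite 0).points) := by
  set t := s.faceOpposite 0
  set C := t.circumcenter
  set r := t.circumradius
  have htQ : ∀ i, dist (t.points i) Q = R := fun i => by
    obtain ⟨j, -, hj⟩ := (s.range_faceOpposite_points 0).subset (Set.mem_range_self i)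
    rw [← hj, hQ]
  have hQC : dist Q C ^ 2 = R ^ 2 - r ^ 2 := t.dist_circumcenter_sq_of_dist_eq_s10 htQ
  have hpC : r < dist (s.points 0) C := s.circumradius_faceOpposite_zero_lt_dist hs
  have hrR : r ^ 2 < R ^ 2 := by
    rcases eq_or_ne Q C with hQC' | hQC'
    · rw [← hQ 0, hQC']
      exact pow_lt_pow_left₀ hpC t.circumradius_nonneg two_ne_zero
    · nlinarith [dist_pos.mpr hQC']
  set f := distSqSubDistSq C Q
  have hf_face : ∀ y ∈ affineSpan ℝ (Set.range t.points), f y = r ^ 2 - R ^ 2 := by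
    refine fun y => f.apply_eq_of_mem_affineSpan ?_
    rintro _ ⟨i, rfl⟩
    rw [distSqSubDistSq_apply, htQ, dist_comm, t.dist_circumcenter_eq_circumradius']
  have hf_left : r ^ 2 - R ^ 2 < f (s.points 0) := by
    rw [distSqSubDistSq_apply, hQ]
    nlinarith [t.circumradius_nonneg]
  have hf_right : r ^ 2 - R ^ 2 < f Q := by
    rw [distSqSubDistSq_apply, dist_self, hQC]
    linarith
  intro x hx hxt
  have hfx : f x ∈ Set.Ioi (r ^ 2 - R ^ 2) :=
    (convex_Ioi _).segment_subset hf_left hf_right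
      (image_segment ℝ f _ _ ▸ Set.mem_image_of_mem f hx)
  exact (hf_face x hxt ▸ hfx : r ^ 2 - R ^ 2 < r ^ 2 - R ^ 2).false

/-- Let `n ≥ 2` and `p_1, ..., p_n ∈ ℝ^d` in good position, and let `Q_n` be their
circumcenter.  Then the closed segment from `p_1` to `Q_n` is disjoint from the affine
span `H(p_2, ..., p_n)`; in particular the points `p_2, ..., p_n, Q_n` are in good
position. -/
theorem segment_disjoint_of_goodPosition (d n : ℕ) (hn : 2 ≤ n)
    (p : ℕ → EuclideanSpace ℝ (Fin d))
    (hgood : GoodPosition p 1 n)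
    (Qn : EuclideanSpace ℝ (Fin d))
    (hQn : IsCircumcenter Qn p 1 n) :
    (∀ x ∈ segment ℝ (p 1) Qn, x ∉ affineSpan ℝ (p '' Set.Icc 2 n)) ∧
    GoodPosition (fun i => if i ≤ n - 1 then p (i + 1) else Qn) 1 n := by
  obtain ⟨k, rfl⟩ : ∃ k, n = k + 2 := ⟨n - 2, by omega⟩
  obtain ⟨hindep, hequi⟩ := goodPosition_iff.mp hgood
  obtain ⟨-, R, hR⟩ := hQn
  let s : Simplex ℝ (EuclideanSpace ℝ (Fin d)) (k + 1) := ⟨_, hindep⟩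
  have hface : p '' Set.Icc 2 (k + 2) = Set.range (s.faceOpposite 0).points := by
    rw [s.range_faceOpposite_points, ← Fin.range_succ, ← Set.range_comp]
    exact image_Icc_two_eq_range p k
  have hdisj := s.segment_disjoint_affineSpan_faceOpposite_zero hequi (Q := Qn)
    fun i => (dist_comm _ _).trans (hR i i.2)
  rw [hface]
  refine ⟨hdisj, goodPosition_iff.mpr ?_⟩
  have hsnoc : (fun i : Fin (k + 2) => if 1 + (i : ℕ) ≤ k + 2 - 1 then p (1 + i + 1) else Qn) =
      Fin.snoc (s.points ∘ Fin.succ) Qn := by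
    funext i
    induction i using Fin.lastCases with
    | last => simp
    | cast i =>
      rw [Fin.snoc_castSucc, Fin.val_castSucc, if_pos (by omega)]
      rfl
  rw [hsnoc]
  refine ⟨(s.independent.comp_embedding (Fin.succEmb _)).snoc ?_,
    (hequi.comp_strictMono Fin.strictMono_succ).snoc fun i => (dist_comm _ _).trans (hR _ i.succ.2)⟩
  rw [Set.range_comp, Fin.coe_succEmb, Fin.range_succ, ← s.range_faceOpposite_points]
  exact hdisj Qn (right_mem_segment ℝ _ _)
end

section
/- If p_1,...,p_{d+1} ∈ ℝ^d are in good position, then there exists an infinite sequence (p_i)_{i≥1} extending them such that for every i ≥ 1, the points p_i,...,p_{i+d} are in good position (in particular affinely independent) and p_{i+d+1} is the circumcenter of p_i,...,p_{i+d}. I.e., every good-position (d+1)-tuple extends to a special d-dimensional iterated circumcenter sequence. -/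
open scoped RealInnerProductSpace
open AffineSubspace

noncomputable section ICSAux

variable {d : ℕ}

lemma goodPosition_of_eq {p q : ℕ → EuclideanSpace ℝ (Fin d)} {a n : ℕ}
    (h : ∀ i < n, q (a + i) = p (a + i)) (hp : GoodPosition p a n) : GoodPosition q a n := by
  obtain ⟨h1, h2⟩ := hp
  constructor
  · convert h1 using 1
    funext i
    exact h i i.isLt
  · intro i j k hi hj hk
    rw [h i hi, h j (hj.trans hi), h k (hk.trans hi)]
    exact h2 i j k hi hj hk

lemma indep_shift (p : ℕ → EuclideanSpace ℝ (Fin d)) (a : ℕ)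
    (hGP : GoodPosition p a (d + 1))
    (hC : IsCircumcenter (p (a + d + 1)) p a (d + 1)) :
    AffineIndependent ℝ (fun i : Fin (d + 1) => p (a + 1 + i)) := by
  obtain ⟨hind, hdist⟩ := hGP
  obtain ⟨-, R, hR⟩ := hC
  set N : Fin (d + 1) → EuclideanSpace ℝ (Fin d) := fun i => p (a + 1 + i) with hN
  have hinj := hind.injective
  have hbis : ∀ k : ℕ, k < d → ∀ i : Fin (d + 1), k < (i : ℕ) →
      N i ∈ perpBisector (p (a + k)) (p (a + k + 1)) := by
    intro k hk i hki
    rw [mem_perpBisector_iff_dist_eq']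
    rcases lt_or_eq_of_le (Nat.lt_succ_iff.1 i.isLt) with hi | hi
    · have e1 : a + ((i : ℕ) + 1) = a + 1 + (i : ℕ) := by omega
      have e2 : a + (k + 1) = a + k + 1 := by omega
      have := hdist ((i : ℕ) + 1) k (k + 1) (by omega) (by omega) (by omega)
      rw [e1, e2] at this
      exact this
    · have e1 : a + 1 + (i : ℕ) = a + d + 1 := by omega
      have e2 : a + (k + 1) = a + k + 1 := by omega
      have r1 := hR k (by omega)
      have r2 := hR (k + 1) (by omega)
      rw [e2] at r2
      show dist (p (a + k)) (p (a + 1 + (i : ℕ))) = dist (p (a + k + 1)) (p (a + 1 + (i : ℕ)))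
      rw [e1, dist_comm (p (a + k)), dist_comm (p (a + k + 1)), r1, r2]
  have hNk : ∀ k : ℕ, (hk : k < d) →
      N ⟨k, by omega⟩ ∉ perpBisector (p (a + k)) (p (a + k + 1)) := by
    intro k hk hmem
    rw [mem_perpBisector_iff_dist_eq] at hmem
    have e1 : a + 1 + k = a + k + 1 := by omega
    have hNkv : N ⟨k, by omega⟩ = p (a + k + 1) := by
      show p (a + 1 + k) = _
      rw [e1]
    rw [hNkv, dist_self, dist_eq_zero] at hmem
    have : (⟨k + 1, by omega⟩ : Fin (d + 1)) = ⟨k, by omega⟩ := by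
      apply hinj
      show p (a + (k + 1)) = p (a + k)
      have e2 : a + (k + 1) = a + k + 1 := by omega
      rw [e2, hmem]
    simp [Fin.ext_iff] at this
  rw [affineIndependent_iff_of_fintype]
  intro w hw hvs
  have hzero : ∀ k : ℕ, ∀ hk : k < d, w ⟨k, by omega⟩ = 0 := by
    intro k
    induction k using Nat.strong_induction_on with
    | _ k ih =>
      intro hk
      set u := p (a + k) with hu
      set v := p (a + k + 1) with hv
      set mid := midpoint ℝ u v with hmid
      have hvs' : ∑ i, w i • (N i -ᵥ mid) = 0 := by
        rw [← Finset.weightedVSubOfPoint_apply,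
          ← Finset.weightedVSub_eq_weightedVSubOfPoint_of_sum_eq_zero _ w N hw mid]
        exact hvs
      have hsum : ∑ i, w i * ⟪N i -ᵥ mid, v -ᵥ u⟫ = 0 := by
        have h0 : ⟪(∑ i, w i • (N i -ᵥ mid)), v -ᵥ u⟫ = 0 := by
          rw [hvs']; exact inner_zero_left _
        rw [sum_inner] at h0
        simp only [real_inner_smul_left] at h0
        exact h0
      rw [Finset.sum_eq_single (⟨k, by omega⟩ : Fin (d + 1))] at hsum
      · rcases mul_eq_zero.1 hsum with h | h
        · exact h
        · exact absurd (mem_perpBisector_iff_inner_eq_zero.2 h) (hNk k hk)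
      · intro i _ hne
        rcases lt_trichotomy (i : ℕ) k with hlt | heq | hgt
        · have : w i = 0 := by
            have := ih (i : ℕ) hlt (by omega)
            rwa [Fin.eta] at this
          rw [this, zero_mul]
        · exact absurd (Fin.ext heq) hne
        · have := hbis k hk i hgt
          rw [mem_perpBisector_iff_inner_eq_zero] at this
          rw [this, mul_zero]
      · intro h
        exact absurd (Finset.mem_univ _) h
  intro i
  rcases lt_or_eq_of_le (Nat.lt_succ_iff.1 i.isLt) with hi | hi
  · have := hzero (i : ℕ) hi
    rwa [Fin.eta] at this
  · have hsum : ∑ j, w j = w i := by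
      apply Finset.sum_eq_single
      · intro j _ hne
        have hj : (j : ℕ) < d := by
          rcases lt_or_eq_of_le (Nat.lt_succ_iff.1 j.isLt) with h | h
          · exact h
          · exact absurd (Fin.ext (h.trans hi.symm)) hne
        have := hzero (j : ℕ) hj
        rwa [Fin.eta] at this
      · intro h
        exact absurd (Finset.mem_univ _) h
    rw [← hsum]
    exact hw

lemma goodPosition_step (p : ℕ → EuclideanSpace ℝ (Fin d)) (a : ℕ)
    (hGP : GoodPosition p a (d + 1))
    (hC : IsCircumcenter (p (a + d + 1)) p a (d + 1)) :
    GoodPosition p (a + 1) (d + 1) := by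
  refine ⟨indep_shift p a hGP hC, ?_⟩
  obtain ⟨-, hdist⟩ := hGP
  obtain ⟨-, R, hR⟩ := hC
  intro i j k hi hj hk
  rcases lt_or_eq_of_le (Nat.lt_succ_iff.1 hi) with hi' | hi'
  · have e0 : a + 1 + i = a + (i + 1) := by omega
    have e1 : a + 1 + j = a + (j + 1) := by omega
    have e2 : a + 1 + k = a + (k + 1) := by omega
    rw [e0, e1, e2]
    exact hdist (i + 1) (j + 1) (k + 1) (by omega) (by omega) (by omega)
  · have e0 : a + 1 + i = a + d + 1 := by omega
    have e1 : a + 1 + j = a + (j + 1) := by omega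
    have e2 : a + 1 + k = a + (k + 1) := by omega
    rw [e0, e1, e2, dist_comm _ (p (a + d + 1)), dist_comm _ (p (a + d + 1)),
      hR (j + 1) (by omega), hR (k + 1) (by omega)]

open scoped Classical in
/-- junk-total circumcenter of the window `f 0, ..., f d`. -/
def center (d : ℕ) (f : ℕ → EuclideanSpace ℝ (Fin d)) : EuclideanSpace ℝ (Fin d) :=
  if hA : AffineIndependent ℝ (fun i : Fin (d + 1) => f i) then
    (⟨fun i : Fin (d + 1) => f i, hA⟩ :
      Affine.Simplex ℝ (EuclideanSpace ℝ (Fin d)) d).circumcenter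
  else 0

/-- The sequence of windows of the iterated circumcenter sequence. -/
def W (d : ℕ) (p : ℕ → EuclideanSpace ℝ (Fin d)) : ℕ → ℕ → EuclideanSpace ℝ (Fin d)
  | 0 => fun i => p (1 + i)
  | (k + 1) => fun i => if i < d then W d p k (i + 1) else center d (W d p k)

lemma W_shift (p : ℕ → EuclideanSpace ℝ (Fin d)) :
    ∀ j k i : ℕ, i + j ≤ d → W d p (k + j) i = W d p k (i + j) := by
  intro j
  induction j with
  | zero => intro k i _; rfl
  | succ j ih =>
    intro k i h
    have e : k + (j + 1) = (k + j) + 1 := rfl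
    rw [e]
    show W d p ((k + j) + 1) i = _
    have hi : i < d := by omega
    simp only [W]
    rw [if_pos hi, ih k (i + 1) (by omega)]
    have e2 : i + 1 + j = i + (j + 1) := by omega
    rw [e2]

lemma q_win (p : ℕ → EuclideanSpace ℝ (Fin d)) (k i : ℕ) (hi : i ≤ d) :
    W d p (k + 1 + i - 1) 0 = W d p k i := by
  have e : k + 1 + i - 1 = k + i := by omega
  rw [e, W_shift p i k 0 (by omega), Nat.zero_add]

lemma q_center (p : ℕ → EuclideanSpace ℝ (Fin d)) (k : ℕ) :
    W d p (k + 1 + d + 1 - 1) 0 = center d (W d p k) := by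
  have e : k + 1 + d + 1 - 1 = (k + 1) + d := by omega
  rw [e, W_shift p d (k + 1) 0 (by omega), Nat.zero_add]
  show W d p (k + 1) d = _
  simp only [W]
  rw [if_neg (lt_irrefl d)]

lemma isCircumcenter_W (p : ℕ → EuclideanSpace ℝ (Fin d)) (k : ℕ)
    (hA : AffineIndependent ℝ (fun i : Fin (d + 1) => W d p k i)) :
    IsCircumcenter ((fun n => W d p (n - 1) 0) (k + 1 + d + 1))
      (fun n => W d p (n - 1) 0) (k + 1) (d + 1) := by
  set s : Affine.Simplex ℝ (EuclideanSpace ℝ (Fin d)) d :=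
    ⟨fun i : Fin (d + 1) => W d p k i, hA⟩ with hs
  have hQ : (fun n => W d p (n - 1) 0) (k + 1 + d + 1) = s.circumcenter := by
    show W d p (k + 1 + d + 1 - 1) 0 = _
    rw [q_center p k]
    show center d (W d p k) = _
    rw [center, dif_pos hA]
  have hset : (fun n => W d p (n - 1) 0) '' Set.Ico (k + 1) (k + 1 + (d + 1)) =
      Set.range (fun i : Fin (d + 1) => W d p k ↑i) := by
    ext x
    simp only [Set.mem_image, Set.mem_Ico, Set.mem_range]
    constructor
    · rintro ⟨m, ⟨h1, h2⟩, rfl⟩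
      refine ⟨⟨m - (k + 1), by omega⟩, ?_⟩
      show W d p k (m - (k + 1)) = W d p (m - 1) 0
      have h := q_win p k (m - (k + 1)) (by omega)
      have e : k + 1 + (m - (k + 1)) - 1 = m - 1 := by omega
      rw [e] at h
      exact h.symm
    · rintro ⟨i, rfl⟩
      exact ⟨k + 1 + i, ⟨by omega, by omega⟩,
        q_win p k i (Nat.lt_succ_iff.1 i.isLt)⟩
  constructor
  · rw [hset, hQ]
    exact s.circumcenter_mem_affineSpan
  · refine ⟨s.circumradius, fun i hi => ?_⟩
    rw [hQ]
    show dist s.circumcenter (W d p (k + 1 + i - 1) 0) = s.circumradius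
    rw [q_win p k i (by omega)]
    exact s.dist_circumcenter_eq_circumradius' ⟨i, hi⟩

/-- If `p_1, ..., p_{d+1} ∈ ℝ^d` are in good position, then there is an infinite
sequence `(q_i)_{i ≥ 1}` extending them such that for every `i ≥ 1` the points
`q_i, ..., q_{i+d}` are in good position (in particular affinely independent) and
`q_{i+d+1}` is the circumcenter of `q_i, ..., q_{i+d}`: every good-position
`(d+1)`-tuple extends to a special `d`-dimensional iterated circumcenter sequence. -/
theorem extends_to_special_ICS (d : ℕ) (hd : 2 ≤ d)
    (p : ℕ → EuclideanSpace ℝ (Fin d))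
    (hgood : GoodPosition p 1 (d + 1)) :
    ∃ q : ℕ → EuclideanSpace ℝ (Fin d),
      (∀ i, 1 ≤ i → i ≤ d + 1 → q i = p i) ∧
      ∀ i, 1 ≤ i → GoodPosition q i (d + 1) ∧ IsCircumcenter (q (i + d + 1)) q i (d + 1) := by
  refine ⟨fun n => W d p (n - 1) 0, ?_, ?_⟩
  case refine_1 =>
    intro i h1 h2
    show W d p (i - 1) 0 = p i
    have h := q_win p 0 (i - 1) (by omega)
    have e : 0 + 1 + (i - 1) - 1 = i - 1 := by omega
    rw [e] at h
    rw [h]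
    have e2 : 1 + (i - 1) = i := by omega
    show p (1 + (i - 1)) = p i
    rw [e2]
  have hqp : ∀ i, 1 ≤ i → i ≤ d + 1 → (fun n => W d p (n - 1) 0) i = p i := by
    intro i h1 h2
    show W d p (i - 1) 0 = p i
    have h := q_win p 0 (i - 1) (by omega)
    have e : 0 + 1 + (i - 1) - 1 = i - 1 := by omega
    rw [e] at h
    rw [h]
    have e2 : 1 + (i - 1) = i := by omega
    show p (1 + (i - 1)) = p i
    rw [e2]
  have hwinfun : ∀ k : ℕ,
      (fun i : Fin (d + 1) => (fun n => W d p (n - 1) 0) (k + 1 + ↑i)) =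
      (fun i : Fin (d + 1) => W d p k ↑i) := by
    intro k
    funext i
    exact q_win p k i (Nat.lt_succ_iff.1 i.isLt)
  have main : ∀ k : ℕ, GoodPosition (fun n => W d p (n - 1) 0) (k + 1) (d + 1) ∧
      IsCircumcenter ((fun n => W d p (n - 1) 0) (k + 1 + d + 1))
        (fun n => W d p (n - 1) 0) (k + 1) (d + 1) := by
    intro k
    induction k with
    | zero =>
      have g : GoodPosition (fun n => W d p (n - 1) 0) 1 (d + 1) :=
        goodPosition_of_eq (fun i hi => hqp (1 + i) (by omega) (by omega)) hgood
      have hA : AffineIndependent ℝ (fun i : Fin (d + 1) => W d p 0 ↑i) := by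
        rw [← hwinfun 0]
        exact g.1
      exact ⟨g, isCircumcenter_W p 0 hA⟩
    | succ k ih =>
      have g : GoodPosition (fun n => W d p (n - 1) 0) (k + 1 + 1) (d + 1) :=
        goodPosition_step _ (k + 1) ih.1 ih.2
      have hA : AffineIndependent ℝ (fun i : Fin (d + 1) => W d p (k + 1) ↑i) := by
        rw [← hwinfun (k + 1)]
        exact g.1
      exact ⟨g, isCircumcenter_W p (k + 1) hA⟩
  intro i hi
  obtain ⟨k, rfl⟩ : ∃ k, i = k + 1 := ⟨i - 1, by omega⟩
  exact main k
end ICSAux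
end

section
/- Let p be a special d-dimensional ICS with characteristic sequence a_i = |p_i - p_{i+1}|²/(4|p_{i+1} - p_{i+2}|²). Then F^{(i)}(a_1,...,a_i) > 0 for 1 ≤ i ≤ d-1 and F^{(d)}(a_i, a_{i+1}, ..., a_{i+d-1}) = 0 for all i ≥ 1. -/
/-- A special `d`-dimensional iterated circumcenter sequence: `p_1, ..., p_{d+1}` are
in good position, each `d+1` consecutive points are affinely independent, and
`p_{i+d+1}` is the circumcenter of `p_i, ..., p_{i+d}`. -/
def IsSpecialICS (d : ℕ) (p : ℕ → EuclideanSpace ℝ (Fin d)) : Prop :=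
  GoodPosition p 1 (d + 1) ∧
  ∀ i, 1 ≤ i → AffineIndependent ℝ (fun k : Fin (d + 1) => p (i + k)) ∧
    IsCircumcenter (p (i + d + 1)) p i (d + 1)

open EuclideanGeometry Affine Affine.Simplex


/-- The simplex on all but the last vertex. -/
noncomputable def butLast {d n : ℕ} (T : Affine.Simplex ℝ (EuclideanSpace ℝ (Fin d)) (n+1)) :
    Affine.Simplex ℝ (EuclideanSpace ℝ (Fin d)) n :=
  ⟨fun j => T.points j.castSucc, T.independent.comp_embedding Fin.castSuccEmb⟩

lemma real_step {R r h ℓ μ : ℝ} (hh : h ≠ 0)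
    (e1 : R^2 = (μ-1)^2*h^2) (e2 : R^2 = r^2 + μ^2*h^2) (e3 : ℓ^2 = r^2 + h^2) :
    4*R^2*(ℓ^2 - r^2) = ℓ^4 := by
  have hlin : h^2 - 2*μ*h^2 = r^2 := by linear_combination e2 - e1
  have h4 : ℓ^4 = (ℓ^2)^2 := by ring
  have hl2 : ℓ^2 - r^2 = h^2 := by linarith
  rw [hl2, e1, h4, e3]
  linear_combination (r^2 + 3*h^2 - 2*μ*h^2) * hlin

lemma simplex_step {d n : ℕ} (T : Affine.Simplex ℝ (EuclideanSpace ℝ (Fin d)) (n+1))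
    {ℓ : ℝ} (hdist : ∀ j : Fin (n+1), dist (T.points j.castSucc) (T.points (Fin.last (n+1))) = ℓ) :
    (butLast T).circumradius < ℓ ∧
      4 * T.circumradius ^ 2 * (ℓ ^ 2 - (butLast T).circumradius ^ 2) = ℓ ^ 4 := by
  set T' := butLast T with hT'
  set v := T.points (Fin.last (n+1)) with hv
  have hprojv : ↑(T'.orthogonalProjectionSpan v) = T'.circumcenter :=
    T'.orthogonalProjection_eq_circumcenter_of_dist_eq (r := ℓ) (fun j => hdist j)
  have hprojo : ↑(T'.orthogonalProjectionSpan T.circumcenter) = T'.circumcenter :=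
    T'.orthogonalProjection_eq_circumcenter_of_dist_eq (r := T.circumradius)
      (fun j => T.dist_circumcenter_eq_circumradius j.castSucc)
  set h := dist v T'.circumcenter with hh
  have hvnot : v ∉ affineSpan ℝ (Set.range T'.points) := by
    have hsub : Set.range T'.points ⊆ T.points '' (Set.univ \ {Fin.last (n+1)}) := by
      rintro x ⟨j, rfl⟩
      refine ⟨j.castSucc, ⟨Set.mem_univ _, ?_⟩, rfl⟩
      simp only [Set.mem_singleton_iff]
      exact (Fin.castSucc_lt_last j).ne
    exact fun hmem =>
      (T.independent.notMem_affineSpan_diff (Fin.last (n+1)) Set.univ)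
        (affineSpan_mono ℝ hsub hmem)
  have hne : h ≠ 0 := by
    rw [hh, ← hprojv]
    exact dist_orthogonalProjection_ne_zero_of_notMem hvnot
  have hpos : 0 < h := lt_of_le_of_ne dist_nonneg (Ne.symm hne)
  have mem0 : T'.points 0 ∈ affineSpan ℝ (Set.range T'.points) :=
    mem_affineSpan ℝ (Set.mem_range_self _)
  -- Pythagoras for v
  have pyth1 := T'.dist_sq_eq_dist_orthogonalProjection_sq_add_dist_orthogonalProjection_sq v mem0
  rw [hprojv] at pyth1
  have e3 : ℓ^2 = T'.circumradius^2 + h^2 := by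
    have h1 : dist (T'.points 0) v = ℓ := hdist 0
    rw [h1, T'.dist_circumcenter_eq_circumradius 0, ← hh] at pyth1
    linear_combination pyth1
  -- Pythagoras for the circumcenter
  have pyth2 := T'.dist_sq_eq_dist_orthogonalProjection_sq_add_dist_orthogonalProjection_sq
    T.circumcenter mem0
  rw [hprojo] at pyth2
  have hd0 : dist (T'.points 0) T.circumcenter = T.circumradius :=
    T.dist_circumcenter_eq_circumradius _
  rw [hd0, T'.dist_circumcenter_eq_circumradius 0] at pyth2
  -- collinearity of circumcenters with v
  have hrange : Set.range T.points = insert v (Set.range T'.points) := by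
    ext x
    constructor
    · rintro ⟨j, rfl⟩
      rcases Fin.eq_castSucc_or_eq_last j with ⟨m, rfl⟩ | rfl
      · exact Or.inr ⟨m, rfl⟩
      · exact Or.inl rfl
    · rintro (rfl | ⟨j, rfl⟩)
      · exact ⟨Fin.last _, rfl⟩
      · exact ⟨j.castSucc, rfl⟩
  have hmemo : T.circumcenter ∈
      affineSpan ℝ (insert v ((affineSpan ℝ (Set.range T'.points) : AffineSubspace ℝ _) : Set _)) := by
    rw [affineSpan_insert_affineSpan, ← hrange]
    exact T.circumcenter_mem_affineSpan
  rw [AffineSubspace.mem_affineSpan_insert_iff T'.circumcenter_mem_affineSpan] at hmemo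
  obtain ⟨μ, p0, hp0, hoeq⟩ := hmemo
  rw [← hprojv] at hoeq
  have hp0eq : p0 = T'.circumcenter := by
    have h1 := T'.coe_orthogonalProjection_vadd_smul_vsub_orthogonalProjection
      (p := v) (r₁ := μ) hp0
    rw [← hoeq] at h1
    rw [← h1, hprojo]
  rw [hp0eq, hprojv] at hoeq
  -- hoeq : T.circumcenter = μ • (v -ᵥ T'.circumcenter) +ᵥ T'.circumcenter
  set w : EuclideanSpace ℝ (Fin d) := v -ᵥ T'.circumcenter with hw
  have hnormw : ‖w‖ = h := by
    rw [hw, hh, dist_eq_norm_vsub (EuclideanSpace ℝ (Fin d))]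
  have hdoo : dist T.circumcenter T'.circumcenter = |μ| * h := by
    rw [hoeq, dist_eq_norm_vsub (EuclideanSpace ℝ (Fin d)), vadd_vsub, norm_smul,
      Real.norm_eq_abs, hnormw]
  have hdov : dist T.circumcenter v = |μ - 1| * h := by
    have hveq : v = w +ᵥ T'.circumcenter := by rw [hw, vsub_vadd]
    rw [hoeq, hveq, dist_eq_norm_vsub (EuclideanSpace ℝ (Fin d)),
      vadd_vsub_vadd_cancel_right]
    have hms : μ • w - w = (μ - 1) • w := by rw [sub_smul, one_smul]
    rw [hms, norm_smul, Real.norm_eq_abs, hnormw]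
  have e2' : T.circumradius^2 = T'.circumradius^2 + μ^2*h^2 := by
    rw [hdoo] at pyth2
    have habs : (|μ| * h)^2 = μ^2*h^2 := by rw [mul_pow, sq_abs]
    linear_combination pyth2 + habs
  have hRv : dist T.circumcenter v = T.circumradius := by
    rw [dist_comm]; exact T.dist_circumcenter_eq_circumradius _
  have e1 : T.circumradius^2 = (μ-1)^2*h^2 := by
    rw [← hRv, hdov, mul_pow, sq_abs]
  constructor
  · have hlnn : 0 ≤ ℓ := (hdist 0) ▸ dist_nonneg
    have hsq : T'.circumradius^2 < ℓ^2 := by nlinarith [pow_pos hpos 2]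
    exact lt_of_pow_lt_pow_left₀ 2 hlnn hsq
  · exact real_step hne e1 e2' e3


lemma circumradius_pos_aux {d n : ℕ} (hn : n ≠ 0)
    (s : Affine.Simplex ℝ (EuclideanSpace ℝ (Fin d)) n) : 0 < s.circumradius := by
  obtain ⟨m, rfl⟩ := Nat.exists_eq_succ_of_ne_zero hn
  exact s.circumradius_pos

lemma algebra_main (d : ℕ) (hd : 2 ≤ d) (x : ℕ → ℝ) (L s : ℕ → ℝ)
    (hs0 : s 0 = 0) (hsnn : ∀ k, 0 ≤ s k)
    (hLpos : ∀ k, k ≤ d → 0 < L k)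
    (hx : ∀ k, 1 ≤ k → k ≤ d → x k = L (k-1) ^ 2 / (4 * L k ^ 2))
    (hrec : ∀ k, k + 1 ≤ d → 4 * s (k+1) ^ 2 * (L k ^ 2 - s k ^ 2) = L k ^ 4)
    (hlt : ∀ k, k < d → s k < L k)
    (hlast : s d = L d) :
    (∀ k, k < d → 0 < Frec k x) ∧ Frec d x = 0 := by
  set Fp : ℕ → ℝ := fun k => Nat.casesOn k 1 (fun m => Frec m x) with hFp
  have main : ∀ k, k ≤ d →
      Frec k x * L k ^ 2 = Fp k * (L k ^ 2 - s k ^ 2) ∧ (k < d → 0 < Frec k x) := by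
    intro k
    induction k with
    | zero =>
      intro _
      have h0 : Frec 0 x = 1 := rfl
      have hFp0 : Fp 0 = 1 := rfl
      refine ⟨?_, fun _ => by rw [h0]; norm_num⟩
      rw [h0, hFp0, hs0]; ring
    | succ k ih =>
      intro hk1
      have hkd : k < d := lt_of_lt_of_le (Nat.lt_succ_self k) hk1
      obtain ⟨ihEq, ihPos⟩ := ih hkd.le
      have hPosk : 0 < Frec k x := ihPos hkd
      have hLk := hLpos k hkd.le
      have hLk1 := hLpos (k+1) hk1
      have hD : 0 < L k ^ 2 - s k ^ 2 := by
        nlinarith [hlt k hkd, hsnn k]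
      have hstep : Frec (k+1) x = Frec k x - x (k+1) * Fp k := by
        cases k with
        | zero => show Frec 1 x = Frec 0 x - x 1 * 1
                  show 1 - x 1 = 1 - x 1 * 1; ring
        | succ m => rfl
      have hx4 : 4 * L (k+1) ^ 2 * x (k+1) = L k ^ 2 := by
        have := hx (k+1) (by omega) hk1
        simp only [Nat.add_sub_cancel] at this
        rw [this]
        field_simp
      have hrecv := hrec k hk1
      have hEqNew : Frec (k+1) x * L (k+1) ^ 2 =
          Frec k x * (L (k+1) ^ 2 - s (k+1) ^ 2) := by
        apply mul_right_cancel₀ (show (4*(L k ^ 2 - s k ^ 2)) ≠ 0 by positivity)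
        rw [hstep]
        linear_combination (Frec k x) * hrecv - (Fp k * (L k ^ 2 - s k ^ 2)) * hx4
          + (L k ^ 2) * ihEq
      have hFpk1 : Fp (k+1) = Frec k x := rfl
      refine ⟨by rw [hFpk1]; exact hEqNew, ?_⟩
      intro hk1d
      have hD1 : 0 < L (k+1) ^ 2 - s (k+1) ^ 2 := by
        nlinarith [hlt (k+1) hk1d, hsnn (k+1)]
      have hpr : 0 < Frec (k+1) x * L (k+1) ^ 2 := by
        rw [hEqNew]; exact mul_pos hPosk hD1
      nlinarith [hpr, sq_nonneg (L (k+1))]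
  refine ⟨fun k hk => (main k hk.le).2 hk, ?_⟩
  have h := (main d le_rfl).1
  rw [hlast] at h
  have h0 : Frec d x * L d ^ 2 = 0 := by rw [h]; ring
  rcases mul_eq_zero.mp h0 with h1 | h2
  · exact h1
  · exfalso; have := hLpos d le_rfl; nlinarith [h2]


lemma good_position_propagate (d : ℕ) (p : ℕ → EuclideanSpace ℝ (Fin d))
    (hics : IsSpecialICS d p) : ∀ i, 1 ≤ i → GoodPosition p i (d + 1) := by
  intro i hi
  induction i with
  | zero => omega
  | succ n ih =>
    by_cases hn : n = 0
    · subst hn; exact hics.1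
    · have gp := ih (by omega)
      constructor
      · exact (hics.2 (n+1) (by omega)).1
      · intro m j k hm hj hk
        rcases Nat.lt_or_ge m d with hmd | hmd
        · have := gp.2 (m+1) (j+1) (k+1) (by omega) (by omega) (by omega)
          have e1 : n + 1 + j = n + (j+1) := by omega
          have e2 : n + 1 + k = n + (k+1) := by omega
          have e3 : n + 1 + m = n + (m+1) := by omega
          rw [e1, e2, e3]; exact this
        · have hmd' : m = d := by omega
          obtain ⟨R, hR⟩ := (hics.2 n (by omega)).2.2
          have e1 : n + 1 + j = n + (1+j) := by omega
          have e2 : n + 1 + k = n + (1+k) := by omega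
          have e3 : n + 1 + m = n + d + 1 := by omega
          rw [e1, e2, e3, dist_comm (p (n + (1+j))), dist_comm (p (n + (1+k))),
            hR (1+j) (by omega), hR (1+k) (by omega)]

lemma window (d : ℕ) (hd : 2 ≤ d) (p : ℕ → EuclideanSpace ℝ (Fin d)) (i : ℕ)
    (indep : AffineIndependent ℝ (fun k : Fin (d + 1) => p (i + k)))
    (gp : ∀ m j k : ℕ, m < d + 1 → j < m → k < m →
      dist (p (i + j)) (p (i + m)) = dist (p (i + k)) (p (i + m)))
    (hcc : IsCircumcenter (p (i + d + 1)) p i (d + 1)) :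
    ∃ s : ℕ → ℝ,
      s 0 = 0 ∧ (∀ k, 0 ≤ s k) ∧
      (∀ k, k ≤ d → 0 < dist (p (i + k)) (p (i + k + 1))) ∧
      (∀ k, k + 1 ≤ d →
        4 * s (k+1) ^ 2 * (dist (p (i + k)) (p (i + k + 1)) ^ 2 - s k ^ 2)
          = dist (p (i + k)) (p (i + k + 1)) ^ 4) ∧
      (∀ k, k < d → s k < dist (p (i + k)) (p (i + k + 1))) ∧
      s d = dist (p (i + d)) (p (i + d + 1)) := by
  have indep' : ∀ k : ℕ, k ≤ d → AffineIndependent ℝ (fun j : Fin (k+1) => p (i + j)) := by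
    intro k hk
    exact indep.comp_embedding (Fin.castLEEmb (by omega))
  set Tk : ∀ k : ℕ, k ≤ d → Affine.Simplex ℝ (EuclideanSpace ℝ (Fin d)) k :=
    fun k hk => ⟨fun j : Fin (k+1) => p (i + j), indep' k hk⟩ with hTk
  set s : ℕ → ℝ := fun k => if h : k ≤ d then (Tk k h).circumradius else 0 with hs
  have hsval : ∀ k (h : k ≤ d), s k = (Tk k h).circumradius := fun k h => dif_pos h
  -- key step facts
  have key : ∀ k (hk1 : k + 1 ≤ d),
      (Tk k (Nat.le_of_succ_le hk1)).circumradius < dist (p (i + k)) (p (i + k + 1)) ∧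
      4 * (Tk (k+1) hk1).circumradius ^ 2 *
          (dist (p (i + k)) (p (i + k + 1)) ^ 2 - (Tk k (Nat.le_of_succ_le hk1)).circumradius ^ 2)
        = dist (p (i + k)) (p (i + k + 1)) ^ 4 := by
    intro k hk1
    have hbl : butLast (Tk (k+1) hk1) = Tk k (Nat.le_of_succ_le hk1) := by
      apply Affine.Simplex.ext
      intro j
      rfl
    have hdist : ∀ j : Fin (k+1), dist ((Tk (k+1) hk1).points j.castSucc)
        ((Tk (k+1) hk1).points (Fin.last (k+1))) = dist (p (i + k)) (p (i + k + 1)) := by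
      intro j
      exact gp (k+1) j k (by omega) j.isLt (by omega)
    have h := simplex_step (Tk (k+1) hk1) hdist
    rw [hbl] at h
    exact h
  -- the circumcenter fact
  obtain ⟨hmem, R, hR⟩ := hcc
  have hset : p '' Set.Ico i (i + (d+1)) = Set.range (Tk d le_rfl).points := by
    ext x
    constructor
    · rintro ⟨j, ⟨hj1, hj2⟩, rfl⟩
      refine ⟨⟨j - i, by omega⟩, ?_⟩
      have he : i + (j - i) = j := by omega
      show p (i + (j - i)) = p j
      rw [he]
    · rintro ⟨m, rfl⟩
      exact ⟨i + m, ⟨Nat.le_add_right _ _, by have := m.isLt; omega⟩, rfl⟩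
  rw [hset] at hmem
  have hQ : p (i + d + 1) = (Tk d le_rfl).circumcenter :=
    (Tk d le_rfl).eq_circumcenter_of_dist_eq hmem
      (fun m => by rw [dist_comm]; exact hR m m.isLt)
  have hlast : s d = dist (p (i + d)) (p (i + d + 1)) := by
    rw [hsval d le_rfl]
    have h := (Tk d le_rfl).dist_circumcenter_eq_circumradius (Fin.last d)
    rw [← hQ] at h
    exact h.symm
  have hLpos : ∀ k, k ≤ d → 0 < dist (p (i + k)) (p (i + k + 1)) := by
    intro k hk
    rcases Nat.lt_or_ge k d with hkd | hkd
    · rw [dist_pos]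
      intro he
      have h2 := indep.injective (show (fun j : Fin (d+1) => p (i + j)) ⟨k, by omega⟩ =
        (fun j : Fin (d+1) => p (i + j)) ⟨k+1, by omega⟩ from he)
      simp only [Fin.mk.injEq] at h2
      omega
    · have hkd' : k = d := by omega
      rw [hkd', ← hlast, hsval d le_rfl]
      exact circumradius_pos_aux (by omega) _
  have hs0 : s 0 = 0 := by
    rw [hsval 0 (by omega)]
    have h0 := (Tk 0 (by omega)).dist_circumcenter_eq_circumradius 0
    rw [Affine.Simplex.circumcenter_eq_point (Tk 0 (by omega)) 0] at h0
    simpa using h0.symm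
  have hsnn : ∀ k, 0 ≤ s k := by
    intro k
    by_cases h : k ≤ d
    · rw [hsval k h]; exact circumradius_nonneg _
    · show (if h : k ≤ d then (Tk k h).circumradius else 0) ≥ 0
      rw [dif_neg h]
  refine ⟨s, hs0, hsnn, hLpos, ?_, ?_, hlast⟩
  · intro k hk1
    rw [hsval (k+1) hk1, hsval k (Nat.le_of_succ_le hk1)]
    exact (key k hk1).2
  · intro k hkd
    rw [hsval k (Nat.le_of_lt hkd)]
    exact (key k hkd).1


/-- Let `p` be a special `d`-dimensional ICS with characteristic sequence
`a_i = |p_i - p_{i+1}|²/(4|p_{i+1} - p_{i+2}|²)`. Then `F^{(i)}(a_1,...,a_i) > 0` for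
`1 ≤ i ≤ d-1`, and `F^{(d)}(a_i, a_{i+1}, ..., a_{i+d-1}) = 0` for all `i ≥ 1`. -/
theorem characteristic_sequence_recurrence (d : ℕ) (hd : 2 ≤ d)
    (p : ℕ → EuclideanSpace ℝ (Fin d)) (hics : IsSpecialICS d p)
    (a : ℕ → ℝ)
    (ha : ∀ i, a i = dist (p i) (p (i + 1)) ^ 2 / (4 * dist (p (i + 1)) (p (i + 2)) ^ 2)) :
    (∀ i, 1 ≤ i → i ≤ d - 1 → 0 < Frec i a) ∧
    (∀ i, 1 ≤ i → Frec d (fun k => a (i + k - 1)) = 0) := by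
  have gpAll := good_position_propagate d p hics
  have hwin : ∀ i, 1 ≤ i →
      (∀ k, k < d → 0 < Frec k (fun j => a (i + j - 1))) ∧
        Frec d (fun j => a (i + j - 1)) = 0 := by
    intro i hi
    obtain ⟨indep, hcc⟩ := hics.2 i hi
    have gpd := (gpAll i hi).2
    obtain ⟨s, hs0, hsnn, hLpos, hrec, hlt, hlast⟩ := window d hd p i indep gpd hcc
    refine algebra_main d hd (fun j => a (i + j - 1))
      (fun k => dist (p (i + k)) (p (i + k + 1))) s hs0 hsnn hLpos ?_ hrec hlt hlast
    intro k hk1 hkd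
    have e3 : i + (k - 1) = i + k - 1 := by omega
    have e1 : i + k - 1 + 1 = i + k := by omega
    have e2 : i + k - 1 + 2 = i + k + 1 := by omega
    rw [ha (i + k - 1), e3, e1, e2]
  constructor
  · intro m h1 h2
    have hda : (fun j => a (1 + j - 1)) = a := by
      funext j; congr 1; omega
    have h := (hwin 1 le_rfl).1 m (by omega)
    rwa [hda] at h
  · intro m hm
    exact (hwin m hm).2
end

section
/- Suppose real numbers x_1,...,x_{d-1} satisfy x_i > 0 and F^{(i)}(x_1,...,x_i) > 0 for 1 ≤ i ≤ d-1, and x_d, x_{d+1}, x_{d+2} are defined by the recurrence F^{(d)}(x_{i},...,x_{i+d-1}) = 0 (i = 1, 2, 3). Then x_d = F[1,d-1]/F[1,d-2], x_{d+1} = (x_1 x_2 ⋯ x_{d-1})/(F[1,d-2]·F[2,d-1]), and x_{d+2} = F[1,d-1]/F[2,d-1], where F[i,j] = F^{(j-i+1)}(x_i,...,x_j). -/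
/-- `FF x i j = F[i,j] = F^{(j-i+1)}(x_i, ..., x_j)`, with `F[i,j] = 1` for `j < i`. -/
def FF (x : ℕ → ℝ) (i j : ℕ) : ℝ := Frec (j + 1 - i) (fun k => x (i + k - 1))


lemma FF_of_lt (x : ℕ → ℝ) {i j : ℕ} (h : j < i) : FF x i j = 1 := by
  unfold FF
  rw [Nat.sub_eq_zero_of_le (by omega)]
  rfl

lemma FF_self (x : ℕ → ℝ) (i : ℕ) : FF x i i = 1 - x i := by
  unfold FF
  rw [show i + 1 - i = 1 from by omega]
  show 1 - x (i + 1 - 1) = 1 - x i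
  rw [Nat.add_sub_cancel]

lemma FF_rec (x : ℕ → ℝ) {i j : ℕ} (hi : 1 ≤ i) (h : i ≤ j) :
    FF x i j = FF x i (j - 1) - x j * FF x i (j - 2) := by
  rcases eq_or_lt_of_le h with rfl | hlt
  · rw [FF_self, FF_of_lt x (show i - 1 < i from by omega),
      FF_of_lt x (show i - 2 < i from by omega)]
    ring
  · obtain ⟨n, rfl⟩ : ∃ n, j = i + n + 1 := ⟨j - i - 1, by omega⟩
    unfold FF
    rw [show i + n + 1 + 1 - i = n + 2 from by omega,
        show i + n + 1 - 1 + 1 - i = n + 1 from by omega,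
        show i + n + 1 - 2 + 1 - i = n from by omega]
    show Frec (n + 1) _ - (fun k => x (i + k - 1)) (n + 2) * Frec n _ = _
    simp only
    rw [show i + (n + 2) - 1 = i + n + 1 from by omega]

lemma Frec_left (n : ℕ) : ∀ (x : ℕ → ℝ),
    Frec (n + 2) x = Frec (n + 1) (fun k => x (k + 1)) - x 1 * Frec n (fun k => x (k + 2)) := by
  induction n using Nat.strong_induction_on with
  | _ n ih =>
    rcases n with _ | n
    · intro x
      show (1 - x 1) - x 2 * 1 = (1 - x (1 + 1)) - x 1 * 1
      norm_num
      ring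
    rcases n with _ | n
    · intro x
      show ((1 - x 1) - x 2 * 1) - x 3 * (1 - x 1)
          = ((1 - x (1+1)) - x (2+1) * 1) - x 1 * (1 - x (1+2))
      norm_num; ring
    · intro x
      have e1 : Frec (n + 2 + 2) x = Frec (n + 1 + 2) x - x (n + 2 + 2) * Frec (n + 2) x := rfl
      have e2 : Frec (n + 2 + 1) (fun k => x (k + 1))
          = Frec (n + 2) (fun k => x (k + 1)) - x (n + 2 + 2) * Frec (n + 1) (fun k => x (k + 1)) := rfl
      have e3 : Frec (n + 2) (fun k => x (k + 2))
          = Frec (n + 1) (fun k => x (k + 2)) - x (n + 2 + 2) * Frec n (fun k => x (k + 2)) := rfl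
      rw [e1, ih (n + 1) (by omega) x, ih n (by omega) x, e2, e3]
      ring

lemma FF_left (x : ℕ → ℝ) {i j : ℕ} (h : i ≤ j) :
    FF x i j = FF x (i + 1) j - x i * FF x (i + 2) j := by
  rcases eq_or_lt_of_le h with rfl | hlt
  · rw [FF_self, FF_of_lt x (show i < i + 1 from by omega),
      FF_of_lt x (show i < i + 2 from by omega)]
    ring
  · obtain ⟨n, rfl⟩ : ∃ n, j = i + n + 1 := ⟨j - i - 1, by omega⟩
    unfold FF
    rw [show i + n + 1 + 1 - i = n + 2 from by omega,
        show i + n + 1 + 1 - (i + 1) = n + 1 from by omega,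
        show i + n + 1 + 1 - (i + 2) = n from by omega,
        Frec_left n (fun k => x (i + k - 1))]
    have f1 : (fun k => x (i + (k + 1) - 1)) = (fun k => x (i + 1 + k - 1)) := by
      funext k; congr 1; omega
    have f2 : (fun k => x (i + (k + 2) - 1)) = (fun k => x (i + 2 + k - 1)) := by
      funext k; congr 1; omega
    rw [f1, f2, show i + 1 - 1 = i from by omega]

lemma FF_wron (x : ℕ → ℝ) {i j : ℕ} (hi : 1 ≤ i) (h : i ≤ j) :
    FF x i j * FF x (i + 1) (j - 1) - FF x i (j - 1) * FF x (i + 1) j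
      = -∏ k ∈ Finset.Icc i j, x k := by
  induction j, h using Nat.le_induction with
  | base =>
    rw [FF_self, FF_of_lt x (show i - 1 < i + 1 from by omega),
        FF_of_lt x (show i - 1 < i from by omega),
        FF_of_lt x (show i < i + 1 from by omega), Finset.Icc_self,
        Finset.prod_singleton]
    ring
  | succ j hij ih =>
    have r1 := FF_rec x hi (show i ≤ j + 1 from by omega)
    have r2 := FF_rec x (show 1 ≤ i + 1 from by omega) (show i + 1 ≤ j + 1 from by omega)
    rw [show j + 1 - 1 = j from by omega, show j + 1 - 2 = j - 1 from by omega] at r1 r2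
    rw [show j + 1 - 1 = j from by omega, r1, r2,
      Finset.prod_Icc_succ_top (show i ≤ j + 1 from by omega)]
    linear_combination x (j + 1) * ih

/-- Suppose `d ≥ 2` and `x_1, ..., x_{d-1}` satisfy `x_i > 0` and
`F^{(i)}(x_1,...,x_i) > 0` for `1 ≤ i ≤ d-1`, and `x_d, x_{d+1}, x_{d+2}` satisfy the
recurrence `F^{(d)}(x_i, ..., x_{i+d-1}) = 0` for `i = 1, 2, 3`. Then
`x_d = F[1,d-1]/F[1,d-2]`, `x_{d+1} = (x_1 ⋯ x_{d-1})/(F[1,d-2]·F[2,d-1])` and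
`x_{d+2} = F[1,d-1]/F[2,d-1]`. -/
theorem next_terms_formulas (d : ℕ) (hd : 2 ≤ d) (x : ℕ → ℝ)
    (hpos : ∀ i, 1 ≤ i → i ≤ d - 1 → 0 < x i)
    (hFpos : ∀ i, 1 ≤ i → i ≤ d - 1 → 0 < FF x 1 i)
    (hrec : ∀ i, 1 ≤ i → i ≤ 3 → Frec d (fun k => x (i + k - 1)) = 0) :
    x d = FF x 1 (d - 1) / FF x 1 (d - 2) ∧
    x (d + 1) = (∏ k ∈ Finset.Icc 1 (d - 1), x k) / (FF x 1 (d - 2) * FF x 2 (d - 1)) ∧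
    x (d + 2) = FF x 1 (d - 1) / FF x 2 (d - 1) := by
  obtain ⟨e, rfl⟩ : ∃ e, d = e + 2 := ⟨d - 2, by omega⟩
  simp only [show e + 2 - 1 = e + 1 from by omega, show e + 2 - 2 = e from by omega] at *
  -- translate the recurrence hypotheses into FF form
  have h1 : FF x 1 (e + 2) = 0 := by
    have := hrec 1 le_rfl (by norm_num)
    unfold FF
    rw [show e + 2 + 1 - 1 = e + 2 from by omega]
    exact this
  have h2 : FF x 2 (e + 3) = 0 := by
    have := hrec 2 (by norm_num) (by norm_num)
    unfold FF
    rw [show e + 3 + 1 - 2 = e + 2 from by omega]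
    exact this
  have h3 : FF x 3 (e + 4) = 0 := by
    have := hrec 3 (by norm_num) (by norm_num)
    unfold FF
    rw [show e + 4 + 1 - 3 = e + 2 from by omega]
    exact this
  -- positivity of F[1, d-2] and F[1, d-1]
  have hA1 : 0 < FF x 1 e := by
    rcases Nat.eq_zero_or_pos e with rfl | he
    · rw [FF_of_lt x (by omega)]; norm_num
    · exact hFpos e (by omega) (by omega)
  have hA2 : 0 < FF x 1 (e + 1) := hFpos (e + 1) (by omega) (by omega)
  -- formula for x d
  have r1 := FF_rec x (le_refl 1) (show 1 ≤ e + 2 from by omega)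
  rw [show e + 2 - 1 = e + 1 from by omega, show e + 2 - 2 = e from by omega, h1] at r1
  have hxd : x (e + 2) * FF x 1 e = FF x 1 (e + 1) := by linarith
  have g1 : x (e + 2) = FF x 1 (e + 1) / FF x 1 e := by
    rw [eq_div_iff hA1.ne']; exact hxd
  have hxdpos : 0 < x (e + 2) := by rw [g1]; exact div_pos hA2 hA1
  -- P = x_1 ⋯ x_{d-1} > 0
  have hPpos : 0 < ∏ k ∈ Finset.Icc 1 (e + 1), x k := by
    apply Finset.prod_pos
    intro k hk
    rw [Finset.mem_Icc] at hk
    exact hpos k hk.1 hk.2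
  -- Wronskian at (1, e+2): F[1,e+1] * F[2,e+2] = P * x_{e+2}
  have w1 := FF_wron x (le_refl 1) (show 1 ≤ e + 2 from by omega)
  rw [show e + 2 - 1 = e + 1 from by omega, h1,
    Finset.prod_Icc_succ_top (show 1 ≤ e + 2 from by omega)] at w1
  simp only [show (1:ℕ) + 1 = 2 from rfl, show e + 1 + 1 = e + 2 from rfl] at w1
  -- deduce F[1,e] * F[2,e+2] = P
  have hB2 : FF x 1 e * FF x 2 (e + 2) = ∏ k ∈ Finset.Icc 1 (e + 1), x k := by
    have : x (e + 2) * (FF x 1 e * FF x 2 (e + 2))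
        = x (e + 2) * ∏ k ∈ Finset.Icc 1 (e + 1), x k := by
      linear_combination FF x 2 (e + 2) * hxd - w1
    exact mul_left_cancel₀ hxdpos.ne' this
  have hB2pos : 0 < FF x 2 (e + 2) := by
    have := hPpos
    nlinarith [hA1, hB2]
  -- recurrence at (2, e+3) : x_{e+3} * F[2,e+1] = F[2,e+2]
  have r2 := FF_rec x (by norm_num) (show 2 ≤ e + 3 from by omega)
  rw [show e + 3 - 1 = e + 2 from by omega, show e + 3 - 2 = e + 1 from by omega, h2] at r2
  have hxd1 : x (e + 3) * FF x 2 (e + 1) = FF x 2 (e + 2) := by linarith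
  have hB1ne : FF x 2 (e + 1) ≠ 0 := by
    intro h0
    rw [h0, mul_zero] at hxd1
    exact hB2pos.ne hxd1
  have g2 : x (e + 3) = (∏ k ∈ Finset.Icc 1 (e + 1), x k) / (FF x 1 e * FF x 2 (e + 1)) := by
    rw [eq_div_iff (mul_ne_zero hA1.ne' hB1ne)]
    linear_combination FF x 1 e * hxd1 + hB2
  -- left recursions
  have l1 := FF_left x (show 1 ≤ e + 2 from by omega)
  rw [h1] at l1
  have l2 := FF_left x (show 1 ≤ e + 1 from by omega)
  -- Q = x_2 ⋯ x_d > 0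
  have hQpos : 0 < ∏ k ∈ Finset.Icc 2 (e + 2), x k := by
    rw [Finset.prod_Icc_succ_top (show 2 ≤ e + 2 from by omega)]
    apply mul_pos _ hxdpos
    apply Finset.prod_pos
    intro k hk
    rw [Finset.mem_Icc] at hk
    exact hpos k (by omega) hk.2
  -- Wronskian at (2, e+2): F[3,e+2] * F[1,e+1] = Q
  have w2 := FF_wron x (show 1 ≤ 2 from by norm_num) (show 2 ≤ e + 2 from by omega)
  rw [show e + 2 - 1 = e + 1 from by omega] at w2
  simp only [show (2:ℕ) + 1 = 3 from rfl] at w2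
  have hC2 : FF x 3 (e + 2) * FF x 1 (e + 1) = ∏ k ∈ Finset.Icc 2 (e + 2), x k := by
    linear_combination -w2 + FF x 3 (e + 2) * l2 - FF x 3 (e + 1) * l1
  have hC2pos : 0 < FF x 3 (e + 2) := by nlinarith [hA2, hQpos, hC2]
  -- Wronskian at (2, e+3): F[2,e+2] * F[3,e+3] = Q * x_{e+3}
  have w3 := FF_wron x (show 1 ≤ 2 from by norm_num) (show 2 ≤ e + 3 from by omega)
  rw [show e + 3 - 1 = e + 2 from by omega, h2,
    Finset.prod_Icc_succ_top (show 2 ≤ e + 3 from by omega)] at w3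
  simp only [show (2:ℕ) + 1 = 3 from rfl, show e + 2 + 1 = e + 3 from rfl] at w3
  -- recurrence at (3, e+4): F[3,e+3] = x_{e+4} * F[3,e+2]
  have r3 := FF_rec x (by norm_num) (show 3 ≤ e + 4 from by omega)
  rw [show e + 4 - 1 = e + 3 from by omega, show e + 4 - 2 = e + 2 from by omega, h3] at r3
  have hC3 : FF x 3 (e + 3) = x (e + 4) * FF x 3 (e + 2) := by linarith
  have g3 : x (e + 4) = FF x 1 (e + 1) / FF x 2 (e + 1) := by
    rw [eq_div_iff hB1ne]
    have key : (FF x 3 (e + 2) * FF x 2 (e + 2)) * (x (e + 4) * FF x 2 (e + 1))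
        = (FF x 3 (e + 2) * FF x 2 (e + 2)) * FF x 1 (e + 1) := by
      linear_combination (-(FF x 2 (e + 1))) * FF x 2 (e + 2) * hC3
        - FF x 2 (e + 1) * w3
        + (∏ k ∈ Finset.Icc 2 (e + 2), x k) * hxd1
        - FF x 2 (e + 2) * hC2
    exact mul_left_cancel₀ (mul_pos hC2pos hB2pos).ne' key
  refine ⟨g1, ?_, ?_⟩
  · rw [show e + 2 + 1 = e + 3 from rfl]; exact g2
  · rw [show e + 2 + 2 = e + 4 from rfl]; exact g3
end

section
/- Let u_n be the sequence defined by u_{-1} = u_0 = 1 and u_n = u_{n-1} - t·u_{n-2} for a real parameter t. If t = 1/(4cos²(π/(d+2))), then u_i > 0 for 1 ≤ i ≤ d-1 and u_d = 0. Moreover with this t, the quantity t^{d-1}·u_{d-1}/u_{d-2}² equals 1/(2^{d+2} cos^{d+2}(π/(d+2))). -/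
open Real Polynomial Polynomial.Chebyshev

/-!
For `t = 1/(2x)²` the recurrence `u_n = u_{n-1} - t u_{n-2}`, `u_{-1} = u_0 = 1`, is solved by
`u_n = U_{n+1}(x) / (2x)^{n+1}`, where `U` is the Chebyshev polynomial of the second kind: this is
the three-term recurrence `U_{n+1} = 2X U_n - U_{n-1}` rescaled. At `x = cos θ` we have
`U_{n+1}(cos θ) = sin((n+2)θ) / sin θ`, so for `θ = π/(d+2)` the numerators `sin((i+2)θ)` are
positive for `i < d`, vanish at `i = d`, and equal `sin θ` and `sin 2θ` at `i = d-1` and `i = d-2`.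
-/

theorem eq_of_two_step_recurrence {R : Type*} [Ring R] {t : R} {u v : ℤ → R}
    (hm : u (-1) = v (-1)) (h0 : u 0 = v 0)
    (hu : ∀ n : ℤ, 1 ≤ n → u n = u (n - 1) - t * u (n - 2))
    (hv : ∀ n : ℤ, 1 ≤ n → v n = v (n - 1) - t * v (n - 2)) :
    ∀ n : ℤ, -1 ≤ n → u n = v n := by
  have consecutive : ∀ m : ℕ, u (m - 1) = v (m - 1) ∧ u m = v m := by
    intro m
    induction m with
    | zero => exact ⟨by simpa using hm, by simpa using h0⟩
    | succ m ih =>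
      refine ⟨by simpa using ih.2, ?_⟩
      push_cast
      rw [hu _ (by omega), hv _ (by omega), add_sub_cancel_right,
        show (m : ℤ) + 1 - 2 = m - 1 by ring, ih.1, ih.2]
  intro n hn
  obtain ⟨m, rfl⟩ : ∃ m : ℕ, n = m - 1 := ⟨(n + 1).toNat, by omega⟩
  exact (consecutive m).1

noncomputable def scaledChebyshevU {K : Type*} [Field K] (x : K) (n : ℤ) : K :=
  (U K (n + 1)).eval x / (2 * x) ^ (n + 1)

section scaledChebyshevU

variable {K : Type*} [Field K] (x : K)

theorem scaledChebyshevU_neg_one : scaledChebyshevU x (-1) = 1 := by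
  simp [scaledChebyshevU]

theorem scaledChebyshevU_zero (hx : 2 * x ≠ 0) : scaledChebyshevU x 0 = 1 := by
  simp [scaledChebyshevU, hx]

theorem scaledChebyshevU_recurrence (hx : 2 * x ≠ 0) (n : ℤ) :
    scaledChebyshevU x n =
      scaledChebyshevU x (n - 1) - ((2 * x) ^ 2)⁻¹ * scaledChebyshevU x (n - 2) := by
  have hpow : (2 * x) ^ (n + 1) = (2 * x) ^ (n - 1) * (2 * x) ^ 2 := by
    rw [← zpow_natCast, ← zpow_add₀ hx]; congr 1; push_cast; ring
  have hpow' : (2 * x) ^ n = (2 * x) ^ (n - 1) * (2 * x) := by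
    rw [← zpow_add_one₀ hx, sub_add_cancel]
  simp only [scaledChebyshevU, sub_add_cancel, show n - 2 + 1 = n - 1 by ring, U_add_one,
    eval_sub, eval_mul, eval_X, eval_ofNat, hpow, hpow']
  field_simp

end scaledChebyshevU

section cos

variable {θ : ℝ}

theorem scaledChebyshevU_cos (hsin : sin θ ≠ 0) (n : ℤ) :
    scaledChebyshevU (cos θ) n = sin ((n + 2) * θ) / ((2 * cos θ) ^ (n + 1) * sin θ) := by
  have h := U_real_cos θ (n + 1)
  rw [Int.cast_add, Int.cast_one, add_assoc, one_add_one_eq_two] at h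
  rw [scaledChebyshevU, div_mul_eq_div_div_swap, ← h, mul_div_cancel_right₀ _ hsin]

theorem scaledChebyshevU_cos_pos (hθ : 0 < θ) (hcos : 0 < cos θ) {n : ℤ} (hn : -1 ≤ n)
    (hlt : (n + 2) * θ < π) : 0 < scaledChebyshevU (cos θ) n := by
  have hn' : (-1 : ℝ) ≤ n := by exact_mod_cast hn
  have hsin : 0 < sin θ := sin_pos_of_pos_of_lt_pi hθ (by nlinarith)
  rw [scaledChebyshevU_cos hsin.ne']
  exact div_pos (sin_pos_of_pos_of_lt_pi (by nlinarith) hlt) (by positivity)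

theorem scaledChebyshevU_cos_eq_zero (hsin : sin θ ≠ 0) {n : ℤ} (h : (n + 2) * θ = π) :
    scaledChebyshevU (cos θ) n = 0 := by
  rw [scaledChebyshevU_cos hsin, h, sin_pi, zero_div]

theorem scaledChebyshevU_cos_eq_inv_pow_succ (hsin : sin θ ≠ 0) {n : ℕ}
    (h : (n + 3) * θ = π) : scaledChebyshevU (cos θ) n = ((2 * cos θ) ^ (n + 1))⁻¹ := by
  rw [scaledChebyshevU_cos hsin, show ((n : ℤ) : ℝ) + 2 = (n + 3) - 1 by push_cast; ring,
    sub_one_mul, h, sin_pi_sub, ← Nat.cast_add_one, zpow_natCast]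
  field_simp

theorem scaledChebyshevU_cos_eq_inv_pow (hsin : sin θ ≠ 0) (hcos : cos θ ≠ 0) {n : ℕ}
    (h : (n + 4) * θ = π) : scaledChebyshevU (cos θ) n = ((2 * cos θ) ^ n)⁻¹ := by
  rw [scaledChebyshevU_cos hsin, show ((n : ℤ) : ℝ) + 2 = (n + 4) - 2 by push_cast; ring,
    sub_mul, h, sin_pi_sub, sin_two_mul, ← Nat.cast_add_one, zpow_natCast]
  field_simp
  ring

theorem scaledChebyshevU_cos_ratio (hsin : sin θ ≠ 0) (hcos : cos θ ≠ 0) {n : ℕ}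
    (h : (n + 4) * θ = π) :
    ((2 * cos θ) ^ 2)⁻¹ ^ (n + 1) * scaledChebyshevU (cos θ) (n + 1 : ℕ) /
      scaledChebyshevU (cos θ) n ^ 2 = ((2 * cos θ) ^ (n + 4))⁻¹ := by
  rw [scaledChebyshevU_cos_eq_inv_pow_succ hsin (by push_cast; linarith),
    scaledChebyshevU_cos_eq_inv_pow hsin hcos h]
  simp only [← inv_pow]
  have hy : (2 * cos θ)⁻¹ ≠ 0 := by simp [hcos]
  generalize (2 * cos θ)⁻¹ = y at hy ⊢
  field_simp
  ring

end cos

/-- Let `d ≥ 2` and let `(u_n)_{n ≥ -1}` be the sequence with `u_{-1} = u_0 = 1` and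
`u_n = u_{n-1} - t·u_{n-2}` (so `u_n = F^{(n)}(t, t, ..., t)`), where
`t = 1/(4cos²(π/(d+2)))`. Then `u_i > 0` for `1 ≤ i ≤ d-1`, `u_d = 0`, and
`t^{d-1}·u_{d-1}/u_{d-2}² = 1/(2^{d+2} cos^{d+2}(π/(d+2)))`. -/
theorem equal_parameter_value (d : ℕ) (hd : 2 ≤ d) (t : ℝ)
    (ht : t = 1 / (4 * Real.cos (π / (d + 2)) ^ 2))
    (u : ℤ → ℝ)
    (hm : u (-1) = 1) (h0 : u 0 = 1)
    (hrec : ∀ n : ℤ, 1 ≤ n → u n = u (n - 1) - t * u (n - 2)) :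
    (∀ i : ℤ, 1 ≤ i → i ≤ (d : ℤ) - 1 → 0 < u i) ∧
    u d = 0 ∧
    t ^ (d - 1) * u ((d : ℤ) - 1) / (u ((d : ℤ) - 2)) ^ 2 =
      1 / (2 ^ (d + 2) * Real.cos (π / (d + 2)) ^ (d + 2)) := by
  obtain ⟨e, rfl⟩ : ∃ e, d = e + 2 := ⟨d - 2, by omega⟩
  set θ := π / ((e + 2 : ℕ) + 2) with hθ
  have hπ : ((e : ℝ) + 4) * θ = π := by rw [hθ]; push_cast; field_simp; ring
  have hθ_pos : 0 < θ := by positivity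
  have hθ_le : 4 * θ ≤ π := by rw [← hπ]; gcongr; linarith [e.cast_nonneg (α := ℝ)]
  have hcos : 0 < cos θ := cos_pos_of_mem_Ioo ⟨by linarith, by linarith⟩
  have hsin : 0 < sin θ := sin_pos_of_pos_of_lt_pi hθ_pos (by linarith)
  have hx : 2 * cos θ ≠ 0 := by positivity
  have ht' : t = ((2 * cos θ) ^ 2)⁻¹ := by rw [ht]; ring
  have hu : ∀ n : ℤ, -1 ≤ n → u n = scaledChebyshevU (cos θ) n :=
    eq_of_two_step_recurrence (hm.trans (scaledChebyshevU_neg_one _).symm)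
      (h0.trans (scaledChebyshevU_zero _ hx).symm) hrec
      fun k _ => ht' ▸ scaledChebyshevU_recurrence _ hx k
  refine ⟨fun i hi1 hi2 => ?_, ?_, ?_⟩
  · rw [hu i (by omega)]
    refine scaledChebyshevU_cos_pos hθ_pos hcos (by omega) ?_
    rw [← hπ]
    exact mul_lt_mul_of_pos_right (by exact_mod_cast (by omega : i + 2 < e + 4)) hθ_pos
  · rw [hu _ (by omega)]
    exact scaledChebyshevU_cos_eq_zero hsin.ne' (by push_cast; linarith)
  · rw [show ((e + 2 : ℕ) : ℤ) - 1 = (e + 1 : ℕ) by push_cast; ring,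
      show ((e + 2 : ℕ) : ℤ) - 2 = e by push_cast; ring, hu _ (by omega), hu _ (by omega), ht',
      show e + 2 - 1 = e + 1 from rfl,
      scaledChebyshevU_cos_ratio hsin.ne' hcos.ne' hπ, mul_pow, one_div]
end

section
/- Let p be a special d-dimensional ICS with scale factor r. Then p_{i+d+2} - p_{i+d+3} = -r(p_i - p_{i+1}) for all i ≥ 1; consequently there exists v ∈ ℝ^d such that p_{i+d+2} = v - r·p_i for all i ≥ 1. In particular, p is periodic if and only if r = 1. -/
open Module RealInnerProductSpace

theorem Matrix.det_eq_prod_diag_add_corner {R : Type*} [CommRing R] {n : ℕ}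
    (M : Matrix (Fin (n + 2)) (Fin (n + 2)) R)
    (hM : ∀ a b, b < a → (a, b) ≠ (Fin.last (n + 1), 0) → M a b = 0) :
    M.det = ∏ a, M a a +
      (-1) ^ (n + 1) * M (Fin.last (n + 1)) 0 * (M.submatrix Fin.castSucc Fin.succ).det := by
  have htri : (M.submatrix Fin.castSucc Fin.castSucc).IsUpperTriangular := fun a b hba =>
    hM _ _ (Fin.castSucc_lt_castSucc_iff.mpr hba) (by simp [(Fin.castSucc_lt_last a).ne])
  have hlast : ∀ b : Fin n, M (Fin.last (n + 1)) b.castSucc.succ = 0 := fun b =>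
    hM _ _ (Fin.succ_castSucc b ▸ b.succ.castSucc_lt_last) (by simp [Fin.succ_ne_zero])
  rw [Matrix.det_succ_row _ (Fin.last (n + 1)), Fin.sum_univ_succ, Fin.sum_univ_castSucc]
  simp only [hlast, mul_zero, zero_mul, Finset.sum_const_zero, zero_add, Fin.succAbove_last,
    Fin.succAbove_zero, Fin.succ_last, Matrix.det_of_isUpperTriangular htri, Fin.prod_univ_castSucc]
  simp [← two_mul, pow_mul]
  ring

section InnerProductSpace

variable {E : Type*} [NormedAddCommGroup E] [InnerProductSpace ℝ E] [FiniteDimensional ℝ E]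

theorem inner_pos_of_neg_tridiagonal {n : ℕ} (hE : finrank ℝ E = n + 1) {v : ℕ → E}
    (hli : LinearIndependent ℝ fun a : Fin (n + 1) => v (a + 1))
    (hadj : ∀ a ≤ n + 1, ⟪v a, v (a + 1)⟫ < 0)
    (horth : ∀ a b, a + 2 ≤ b → b ≤ a + n + 1 → ⟪v a, v b⟫ = 0) :
    0 < ⟪v 0, v (n + 2)⟫ := by
  -- `M` is singular (its rows come from `n + 2` vectors in dimension `n + 1`) and upper triangular
  -- up to the corner `⟪v (n + 2), v 0⟫`; the minor of that corner is a Gram matrix.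
  let M : Matrix (Fin (n + 2)) (Fin (n + 2)) ℝ := .of fun a b => ⟪v (a + 1), v b⟫
  have hdet : M.det = 0 := by
    refine Matrix.det_eq_zero_of_not_linearIndependent_rows fun hrows => ?_
    have hcomp : (LinearMap.pi fun b : Fin (n + 2) => (innerₗ E).flip (v b)) ∘
        (fun a : Fin (n + 2) => v (a + 1)) = fun a => M a := by
      ext a b; simp [M, real_inner_comm]
    have := (LinearIndependent.of_comp _ (hcomp ▸ hrows)).fintype_card_le_finrank
    simp [hE] at this
  have htri : ∀ a b, b < a → (a, b) ≠ (Fin.last (n + 1), 0) → M a b = 0 := by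
    intro a b hba hab
    have : (a : ℕ) ≠ n + 1 ∨ (b : ℕ) ≠ 0 := by
      by_contra! h
      exact hab (Prod.ext (Fin.ext h.1) (Fin.ext h.2))
    show ⟪v (a + 1), v b⟫ = 0
    rw [real_inner_comm]
    exact horth _ _ (by omega) (by omega)
  have hgram : M.submatrix Fin.castSucc Fin.succ =
      Matrix.gram ℝ fun a : Fin (n + 1) => v (a + 1) := by
    ext a b; simp [M]
  have hG : 0 < (M.submatrix Fin.castSucc Fin.succ).det :=
    hgram ▸ (Matrix.posDef_gram_of_linearIndependent hli).det_pos
  have hP : 0 < ∏ a, -M a a := Finset.prod_pos fun a _ => by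
    simpa [M, real_inner_comm] using hadj a (by omega)
  have hdiag : ∏ a, -M a a = (-1) ^ (n + 2) * ∏ a, M a a := by
    simp [Finset.prod_neg]
  have hcorner : M (Fin.last (n + 1)) 0 = ⟪v 0, v (n + 2)⟫ := by simp [M, real_inner_comm]
  rw [Matrix.det_eq_prod_diag_add_corner M htri, hcorner] at hdet
  have hsign : ((-1 : ℝ) ^ (n + 1)) ^ 2 = 1 := by simp [← pow_mul, pow_mul']
  have hkey : ⟪v 0, v (n + 2)⟫ * (M.submatrix Fin.castSucc Fin.succ).det = ∏ a, -M a a := by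
    linear_combination (-1) * hdiag + (-1 : ℝ) ^ (n + 1) * hdet
      - ⟪v 0, v (n + 2)⟫ * (M.submatrix Fin.castSucc Fin.succ).det * hsign
  exact pos_of_mul_pos_left (hkey ▸ hP) hG.le

theorem exists_eq_smul_of_inner_eq_zero {n : ℕ} (hE : finrank ℝ E = n + 1) {v : Fin n → E}
    (hv : LinearIndependent ℝ v) {x y : E} (hx : ∀ a, ⟪v a, x⟫ = 0) (hy : ∀ a, ⟪v a, y⟫ = 0)
    (hx0 : x ≠ 0) : ∃ c : ℝ, y = c • x := by
  set W := Submodule.span ℝ (Set.range v)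
  have mem_orth : ∀ z, (∀ a, ⟪v a, z⟫ = 0) → z ∈ Wᗮ := fun z hz =>
    (Submodule.isOrtho_span.mpr (by rintro _ ⟨a, rfl⟩ _ rfl; exact hz a)).symm.le
      (Submodule.mem_span_singleton_self z)
  have hW : finrank ℝ Wᗮ = 1 := by
    have := W.finrank_add_finrank_orthogonal
    rw [finrank_span_eq_card hv, Fintype.card_fin] at this
    omega
  obtain ⟨c, hc⟩ := (finrank_eq_one_iff_of_nonzero' (⟨x, mem_orth x hx⟩ : Wᗮ)
    (by simpa using hx0)).mp hW ⟨y, mem_orth y hy⟩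
  exact ⟨c, congrArg Subtype.val hc.symm⟩

end InnerProductSpace

theorem one_div_two_pow_mul_sqrt_prod {m : ℕ → ℝ} (hm : ∀ k, 1 ≤ k → 0 < m k) (n : ℕ) :
    1 / (2 ^ n * √(∏ k ∈ Finset.Icc 1 n, m k ^ 2 / (4 * m (k + 1) ^ 2))) = m (n + 1) / m 1 := by
  have hprod : ∀ n, ∏ k ∈ Finset.Icc 1 n, m k ^ 2 / (4 * m (k + 1) ^ 2) =
      (m 1 / (2 ^ n * m (n + 1))) ^ 2 := by
    intro n
    induction n with
    | zero => simp [(hm 1 le_rfl).ne']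
    | succ n ih =>
      rw [Finset.prod_Icc_succ_top (by omega), ih]
      have hn1 := hm (n + 1) (by omega)
      have hn2 := hm (n + 2) (by omega)
      field_simp
      ring
  have h1 := hm 1 le_rfl
  have hn1 := hm (n + 1) (by omega)
  rw [hprod, Real.sqrt_sq (by positivity)]
  field_simp

def edge {V : Type*} [AddGroup V] (p : ℕ → V) (j : ℕ) : V := p j - p (j + 1)

theorem sub_smul_eq_of_edge_add_eq_smul {K V : Type*} [CommRing K] [AddCommGroup V] [Module K V]
    {f : ℕ → V} {i₀ k : ℕ} {c : K} (h : ∀ i, i₀ ≤ i → edge f (i + k) = c • edge f i) :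
    ∀ i, i₀ ≤ i → f (i + k) - c • f i = f (i₀ + k) - c • f i₀ := by
  refine Nat.le_induction rfl fun i hi ih => ?_
  have hstep := h i hi
  rw [edge, edge] at hstep
  rw [← ih, show i + 1 + k = i + k + 1 by omega]
  linear_combination (norm := module) -hstep

theorem eq_pow_smul_of_add_eq_smul {M V : Type*} [Monoid M] [MulAction M V] {f : ℕ → V}
    {i₀ k : ℕ} {c : M} (h : ∀ i, i₀ ≤ i → f (i + k) = c • f i) (t : ℕ) :
    f (i₀ + t * k) = c ^ t • f i₀ := by
  induction t with
  | zero => simp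
  | succ t ih =>
    rw [add_mul, one_mul, ← add_assoc, h _ (by omega), ih, smul_smul, pow_succ']

theorem pow_eq_one_of_add_eq_smul_of_periodic {K V : Type*} [Field K] [AddCommGroup V]
    [Module K V] {f : ℕ → V} {i₀ k m : ℕ} {c : K} (h : ∀ i, i₀ ≤ i → f (i + k) = c • f i)
    (hper : ∀ i, i₀ ≤ i → f (i + m) = f i) (hf : f i₀ ≠ 0) : c ^ m = 1 := by
  have hc := eq_pow_smul_of_add_eq_smul h m
  have h1 := eq_pow_smul_of_add_eq_smul (f := f) (k := m) (c := (1 : K))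
    (fun i hi => by rw [hper i hi, one_smul]) k
  rw [one_pow, one_smul, mul_comm, hc] at h1
  exact smul_left_injective K hf (by simpa using h1)

namespace IsSpecialICS

variable {d : ℕ} {p : ℕ → EuclideanSpace ℝ (Fin d)}

theorem dist_eq_dist_of_lt_of_le (hics : IsSpecialICS d p) {j k m : ℕ} (hj : 1 ≤ j) (hk : 1 ≤ k)
    (hjm : j < m) (hkm : k < m) (hmj : m ≤ j + d + 1) (hmk : m ≤ k + d + 1) :
    dist (p j) (p m) = dist (p k) (p m) := by
  obtain ⟨n, rfl⟩ : ∃ n, m = n + 1 := ⟨m - 1, by omega⟩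
  rcases Nat.lt_or_ge n (d + 1) with hn | hn
  · have h := hics.1.2 n (j - 1) (k - 1) hn (by omega) (by omega)
    rwa [Nat.add_sub_cancel' hj, Nat.add_sub_cancel' hk, add_comm 1 n] at h
  · obtain ⟨R, hR⟩ := (hics.2 (n - d) (by omega)).2.2
    have hjR := hR (j - (n - d)) (by omega)
    have hkR := hR (k - (n - d)) (by omega)
    rw [Nat.add_sub_cancel' (by omega), show n - d + d + 1 = n + 1 by omega] at hjR hkR
    rw [dist_comm, hjR, dist_comm, hkR]

theorem inner_edge_edge_succ (hics : IsSpecialICS d p) (hd : 0 < d) {j : ℕ} (hj : 1 ≤ j) :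
    ⟪edge p j, edge p (j + 1)⟫ = -‖edge p j‖ ^ 2 / 2 := by
  have h : ‖edge p j + edge p (j + 1)‖ = ‖edge p (j + 1)‖ := by
    simpa [edge, dist_eq_norm] using hics.dist_eq_dist_of_lt_of_le (m := j + 2) hj (k := j + 1)
      (by omega) (by omega) (by omega) (by omega) (by omega)
  have := norm_add_sq_real (edge p j) (edge p (j + 1))
  rw [h] at this
  linarith

theorem inner_edge_edge_add (hics : IsSpecialICS d p) {j k : ℕ} (hj : 1 ≤ j) (hk : 2 ≤ k)
    (hkd : k ≤ d) : ⟪edge p j, edge p (j + k)⟫ = 0 := by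
  rw [real_inner_comm]
  exact EuclideanGeometry.inner_vsub_vsub_of_dist_eq_of_dist_eq
    (hics.dist_eq_dist_of_lt_of_le (by omega) hj (by omega) (by omega) (by omega) (by omega))
    (hics.dist_eq_dist_of_lt_of_le (by omega) hj (by omega) (by omega) (by omega) (by omega))

theorem linearIndependent_edge (hics : IsSpecialICS d p) {j : ℕ} (hj : 1 ≤ j) :
    LinearIndependent ℝ fun a : Fin d => edge p (j + a) := by
  have hspan : affineSpan ℝ (Set.range fun k : Fin (d + 1) => p (j + k)) = ⊤ :=
    (hics.2 j hj).1.affineSpan_eq_top_iff_card_eq_finrank_add_one.mpr (by simp)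
  refine linearIndependent_of_top_le_span_of_card_eq_finrank ?_ (by simp)
  rw [← AffineSubspace.direction_top ℝ _ (EuclideanSpace ℝ (Fin d)), ← hspan,
    direction_affineSpan, vectorSpan_eq_span_vsub_set_right ℝ (Set.mem_range_self 0),
    Submodule.span_le]
  rintro _ ⟨_, ⟨k, rfl⟩, rfl⟩
  simp only [Fin.val_zero, vsub_eq_sub, SetLike.mem_coe]
  rw [← Finset.sum_range_sub (fun c => p (j + c))]
  refine Submodule.sum_mem _ fun c hc => ?_
  have hcd : c < d := by have := k.isLt; simp at hc; omega
  have hmem : edge p (j + c) ∈ Submodule.span ℝ (Set.range fun a : Fin d => edge p (j + a)) :=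
    Submodule.subset_span ⟨⟨c, hcd⟩, rfl⟩
  simpa [edge, add_assoc] using Submodule.neg_mem _ hmem

theorem edge_ne_zero (hics : IsSpecialICS d p) (hd : 0 < d) {j : ℕ} (hj : 1 ≤ j) :
    edge p j ≠ 0 := by
  simpa using (hics.linearIndependent_edge hj).ne_zero ⟨0, hd⟩

theorem inner_edge_edge_pos (hics : IsSpecialICS d p) (hd : 0 < d) {j : ℕ} (hj : 1 ≤ j) :
    0 < ⟪edge p j, edge p (j + d + 1)⟫ := by
  obtain ⟨n, rfl⟩ : ∃ n, d = n + 1 := ⟨d - 1, by omega⟩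
  have := inner_pos_of_neg_tridiagonal (v := fun a => edge p (j + a)) finrank_euclideanSpace_fin
    (by simpa only [add_assoc, add_comm 1] using
      hics.linearIndependent_edge (j := j + 1) (by omega))
    (fun a _ => by
      have := norm_pos_iff.mpr (hics.edge_ne_zero hd (j := j + a) (by omega))
      rw [← add_assoc, hics.inner_edge_edge_succ hd (by omega)]
      nlinarith)
    (fun a b hab hbn => by
      simpa [add_assoc, Nat.add_sub_cancel' (by omega : a ≤ b)] using
        hics.inner_edge_edge_add (j := j + a) (k := b - a) (by omega) (by omega) (by omega))
  simpa [add_assoc] using this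

theorem exists_edge_eq_smul (hics : IsSpecialICS d p) (hd : 0 < d) {j : ℕ} (hj : 1 ≤ j) :
    ∃ c : ℝ, edge p (j + d + 2) = c • edge p j := by
  obtain ⟨n, rfl⟩ : ∃ n, d = n + 1 := ⟨d - 1, by omega⟩
  have hli : LinearIndependent ℝ fun a : Fin n => edge p (j + 2 + a) := by
    simpa only [Function.comp_def, Fin.val_castSucc] using
      (hics.linearIndependent_edge (j := j + 2) (by omega)).comp _ (Fin.castSucc_injective n)
  have hx : ∀ a : Fin n, ⟪edge p (j + 2 + a), edge p j⟫ = 0 := fun a => by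
    rw [real_inner_comm, add_assoc]
    exact hics.inner_edge_edge_add hj (by omega) (by omega)
  have hy : ∀ a : Fin n, ⟪edge p (j + 2 + a), edge p (j + (n + 1) + 2)⟫ = 0 := fun a => by
    have := hics.inner_edge_edge_add (j := j + 2 + a) (k := n + 1 - a) (by omega) (by omega)
      (by omega)
    rwa [show j + 2 + a + (n + 1 - a) = j + (n + 1) + 2 by omega] at this
  exact exists_eq_smul_of_inner_eq_zero finrank_euclideanSpace_fin hli hx hy
    (hics.edge_ne_zero hd hj)

theorem neg_of_edge_eq_smul (hics : IsSpecialICS d p) (hd : 0 < d) {i : ℕ} (hi : 1 ≤ i) {L : ℝ}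
    (hL : edge p (i + d + 2) = L • edge p i) : L < 0 := by
  have hsucc := hics.inner_edge_edge_succ hd (j := i + d + 1) (by omega)
  rw [show i + d + 1 + 1 = i + d + 2 from rfl, hL, real_inner_smul_right, real_inner_comm] at hsucc
  have hpos := hics.inner_edge_edge_pos hd hi
  have hne := norm_pos_iff.mpr (hics.edge_ne_zero hd (j := i + d + 1) (by omega))
  nlinarith

theorem eq_of_edge_eq_smul (hics : IsSpecialICS d p) (hd : 0 < d) {i : ℕ} (hi : 1 ≤ i) {L c : ℝ}
    (hL0 : L ≠ 0) (hL : edge p (i + d + 2) = L • edge p i)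
    (hc : edge p (i + 1 + d + 2) = c • edge p (i + 1)) : c = L := by
  have hsucc := hics.inner_edge_edge_succ hd (j := i + d + 2) (by omega)
  rw [show i + d + 2 + 1 = i + 1 + d + 2 by omega, hc, hL, real_inner_smul_left,
    real_inner_smul_right, hics.inner_edge_edge_succ hd hi, norm_smul, Real.norm_eq_abs, mul_pow,
    sq_abs] at hsucc
  have hne := norm_pos_iff.mpr (hics.edge_ne_zero hd hi)
  have : L * (c - L) * ‖edge p i‖ ^ 2 = 0 := by linarith
  simpa [hL0, hne.ne', sub_eq_zero] using this

theorem exists_neg_edge_eq_smul (hics : IsSpecialICS d p) (hd : 0 < d) :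
    ∃ L : ℝ, L < 0 ∧ ∀ i, 1 ≤ i → edge p (i + d + 2) = L • edge p i := by
  obtain ⟨L, hL⟩ := hics.exists_edge_eq_smul hd le_rfl
  have hneg := hics.neg_of_edge_eq_smul hd le_rfl hL
  refine ⟨L, hneg, Nat.le_induction hL fun i hi ih => ?_⟩
  obtain ⟨c, hc⟩ := hics.exists_edge_eq_smul hd (j := i + 1) (by omega)
  rwa [hics.eq_of_edge_eq_smul hd hi hneg.ne ih hc] at hc

end IsSpecialICS

/-- Let `p` be a special `d`-dimensional ICS with scale factor
`r = 1/(2^{d+2}√(a_1 ⋯ a_{d+2}))` where `a_i = |p_i-p_{i+1}|²/(4|p_{i+1}-p_{i+2}|²)`.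
Then `p_{i+d+2} - p_{i+d+3} = -r(p_i - p_{i+1})` for all `i ≥ 1`; consequently there
is a point `v ∈ ℝ^d` with `p_{i+d+2} = v - r·p_i` for all `i ≥ 1`. In particular,
`p` is periodic if and only if `r = 1`. -/
theorem scale_factor_structure (d : ℕ) (hd : 2 ≤ d)
    (p : ℕ → EuclideanSpace ℝ (Fin d)) (hics : IsSpecialICS d p)
    (a : ℕ → ℝ)
    (ha : ∀ i, a i = dist (p i) (p (i + 1)) ^ 2 / (4 * dist (p (i + 1)) (p (i + 2)) ^ 2))
    (r : ℝ)
    (hr : r = 1 / (2 ^ (d + 2) * Real.sqrt (∏ k ∈ Finset.Icc 1 (d + 2), a k))) :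
    (∀ i, 1 ≤ i → p (i + d + 2) - p (i + d + 3) = (-r) • (p i - p (i + 1))) ∧
    (∃ v : EuclideanSpace ℝ (Fin d), ∀ i, 1 ≤ i → p (i + d + 2) = v - r • p i) ∧
    ((∃ m : ℕ, 0 < m ∧ ∀ i, 1 ≤ i → p (i + m) = p i) ↔ r = 1) := by
  have hd0 : 0 < d := by omega
  obtain ⟨L, hLneg, hL⟩ := hics.exists_neg_edge_eq_smul hd0
  have hrL : r = -L := by
    have ha' : ∀ k, a k = ‖edge p k‖ ^ 2 / (4 * ‖edge p (k + 1)‖ ^ 2) := fun k => by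
      rw [ha, dist_eq_norm, dist_eq_norm]; rfl
    rw [hr, Finset.prod_congr rfl fun k _ => ha' k, one_div_two_pow_mul_sqrt_prod
      (fun k hk => norm_pos_iff.mpr (hics.edge_ne_zero hd0 hk)), add_comm (d + 2), ← add_assoc,
      hL 1 le_rfl, norm_smul, Real.norm_eq_abs, abs_of_neg hLneg,
      mul_div_cancel_right₀ _ (norm_ne_zero_iff.mpr (hics.edge_ne_zero hd0 le_rfl))]
  subst hrL
  obtain ⟨v, hv⟩ : ∃ v, ∀ i, 1 ≤ i → p (i + d + 2) = v + L • p i :=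
    ⟨_, fun i hi => eq_add_of_sub_eq (sub_smul_eq_of_edge_add_eq_smul (k := d + 2) hL i hi)⟩
  refine ⟨fun i hi => (neg_neg L).symm ▸ hL i hi, ⟨v, fun i hi => by rw [hv i hi, neg_smul,
    sub_neg_eq_add]⟩, ⟨fun ⟨m, hm, hper⟩ => ?_, fun hL1 => ⟨2 * (d + 2), by omega, fun i hi => ?_⟩⟩⟩
  · have hLm := pow_eq_one_of_add_eq_smul_of_periodic (f := edge p) (k := d + 2) (m := m) hL
      (fun i hi => by simp only [edge, show i + m + 1 = i + 1 + m by omega, hper i hi,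
        hper (i + 1) (by omega)])
      (hics.edge_ne_zero hd0 le_rfl)
    rw [← abs_of_neg hLneg]
    exact (pow_eq_one_iff_of_nonneg (abs_nonneg L) hm.ne').mp (by rw [← abs_pow, hLm, abs_one])
  · rw [show i + 2 * (d + 2) = i + d + 2 + d + 2 by omega, hv _ (by omega), hv i hi,
      neg_eq_iff_eq_neg.mp hL1]
    module
end

section
/- (Goddyn's conjecture) Let d ≥ 2 and let p be a d-dimensional iterated circumcenter sequence that is periodic. Then its minimal period is exactly 2d+4. -/
open scoped RealInnerProductSpace

variable {F : Type*} [NormedAddCommGroup F] [InnerProductSpace ℝ F]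

lemma inner4 (a b c e : F) :
    ⟪b - a, e - c⟫ = (dist a e ^ 2 - dist a c ^ 2 - dist b e ^ 2 + dist b c ^ 2) / 2 := by
  simp only [dist_eq_norm, ← real_inner_self_eq_norm_sq]
  simp only [inner_sub_left, inner_sub_right]
  rw [real_inner_comm e a, real_inner_comm c a, real_inner_comm e b, real_inner_comm c b]
  ring

lemma equilateral_absurd {d : ℕ} (q : Fin (d + 2) → EuclideanSpace ℝ (Fin d)) (ρ : ℝ)
    (hρ : 0 < ρ) (h : ∀ i j : Fin (d + 2), i < j → dist (q i) (q j) = ρ) : False := by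
  classical
  set v : Fin (d + 1) → EuclideanSpace ℝ (Fin d) := fun j => q j.succ - q 0 with hv
  have hd0 : ∀ j : Fin (d + 1), dist (q 0) (q j.succ) = ρ := fun j => h 0 j.succ (Fin.succ_pos j)
  have hdist : ∀ j k : Fin (d + 1), j ≠ k → dist (q j.succ) (q k.succ) = ρ := by
    intro j k hjk
    rcases lt_or_gt_of_ne hjk with hlt | hgt
    · exact h _ _ (by simpa using hlt)
    · rw [dist_comm]; exact h _ _ (by simpa using hgt)
  have hvv : ∀ j k : Fin (d + 1), ⟪v j, v k⟫ = ρ ^ 2 / 2 + (if j = k then ρ ^ 2 / 2 else 0) := by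
    intro j k
    have h4 := inner4 (q 0) (q j.succ) (q 0) (q k.succ)
    rw [hv]
    simp only []
    rw [h4, dist_comm (q j.succ) (q 0), hd0 j, hd0 k, dist_self]
    by_cases hjk : j = k
    · subst hjk; rw [dist_self, if_pos rfl]; ring
    · rw [hdist j k hjk, if_neg hjk]; ring
  have hli : LinearIndependent ℝ v := by
    rw [Fintype.linearIndependent_iff]
    intro g hg
    have hip : ∀ k : Fin (d + 1), (∑ i, g i) * (ρ ^ 2 / 2) + g k * (ρ ^ 2 / 2) = 0 := by
      intro k
      have h0 : ⟪∑ i, g i • v i, v k⟫ = (0 : ℝ) := by rw [hg, inner_zero_left]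
      rw [sum_inner] at h0
      simp only [real_inner_smul_left, hvv] at h0
      calc (∑ i, g i) * (ρ ^ 2 / 2) + g k * (ρ ^ 2 / 2)
          = ∑ i, g i * (ρ ^ 2 / 2 + if i = k then ρ ^ 2 / 2 else 0) := by
            rw [Finset.sum_congr rfl (fun i _ => mul_add (g i) _ _), Finset.sum_add_distrib]
            congr 1
            · rw [← Finset.sum_mul]
            · rw [Finset.sum_congr rfl (fun i _ => by rw [mul_ite, mul_zero]),
                Finset.sum_ite_eq' Finset.univ k (fun i => g i * (ρ ^ 2 / 2))]
              simp
        _ = 0 := h0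
    have hρ2 : ρ ^ 2 / 2 ≠ 0 := by positivity
    have hgk : ∀ k, g k = -(∑ i, g i) := by
      intro k
      have := hip k
      have h2 : ((∑ i, g i) + g k) * (ρ ^ 2 / 2) = 0 := by ring_nf; ring_nf at this; linarith
      rcases mul_eq_zero.mp h2 with h3 | h3
      · linarith
      · exact absurd h3 hρ2
    have hz : (∑ i, g i) = 0 := by
      have h1 : ∑ k : Fin (d + 1), g k = ∑ _k : Fin (d + 1), -(∑ i, g i) :=
        Finset.sum_congr rfl (fun k _ => hgk k)
      simp only [Finset.sum_const, Finset.card_univ, Fintype.card_fin, nsmul_eq_mul] at h1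
      have : (1 + (d + 1 : ℝ)) * (∑ i, g i) = 0 := by push_cast at h1 ⊢; linarith
      have hne : (1 + (d + 1 : ℝ)) ≠ 0 := by positivity
      exact (mul_eq_zero.mp this).resolve_left hne
    intro k
    rw [hgk k, hz, neg_zero]
  have hcard := hli.fintype_card_le_finrank
  rw [Fintype.card_fin, finrank_euclideanSpace_fin] at hcard
  omega

lemma exists_smul_of_orthogonal {d : ℕ} {ι : Type*} [Fintype ι]
    (hcard : Fintype.card ι + 1 = d) (v : ι → EuclideanSpace ℝ (Fin d))
    (hv : LinearIndependent ℝ v) {u w : EuclideanSpace ℝ (Fin d)} (hu : u ≠ 0)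
    (hou : ∀ j, ⟪v j, u⟫ = 0) (how : ∀ j, ⟪v j, w⟫ = 0) : ∃ c : ℝ, w = c • u := by
  classical
  set K := Submodule.span ℝ (Set.range v) with hK
  have hmem : ∀ {x : EuclideanSpace ℝ (Fin d)}, (∀ j, ⟪v j, x⟫ = 0) → x ∈ Kᗮ := by
    intro x hx
    rw [Submodule.mem_orthogonal]
    intro y hy
    induction hy using Submodule.span_induction with
    | mem y hy => obtain ⟨j, rfl⟩ := hy; exact hx j
    | zero => exact inner_zero_left x
    | add y z _ _ hy hz => rw [inner_add_left, hy, hz, add_zero]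
    | smul c y _ hy => rw [real_inner_smul_left, hy, mul_zero]
  have hKrank : Module.finrank ℝ K = Fintype.card ι := finrank_span_eq_card hv
  have htot := Submodule.finrank_add_finrank_orthogonal K
  rw [hKrank, finrank_euclideanSpace_fin] at htot
  have horank : Module.finrank ℝ Kᗮ = 1 := by omega
  have hle : Submodule.span ℝ {u} ≤ Kᗮ := by
    rw [Submodule.span_singleton_le_iff_mem]; exact hmem hou
  have hspan : Submodule.span ℝ {u} = Kᗮ := by
    apply Submodule.eq_of_le_of_finrank_le hle
    rw [horank, finrank_span_singleton hu]
  have hwmem : w ∈ Submodule.span ℝ ({u} : Set (EuclideanSpace ℝ (Fin d))) := by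
    rw [hspan]; exact hmem how
  obtain ⟨c, hc⟩ := Submodule.mem_span_singleton.mp hwmem
  exact ⟨c, hc.symm⟩


/-- A `d`-dimensional iterated circumcenter sequence: for every `i ≥ 1` the points
`p_i, ..., p_{i+d}` are affinely independent (hence distinct and lying on a unique
`(d-1)`-sphere) and `p_{i+d+1}` is the center of that sphere. -/
def IsICS (d : ℕ) (p : ℕ → EuclideanSpace ℝ (Fin d)) : Prop :=
  ∀ i, 1 ≤ i → AffineIndependent ℝ (fun k : Fin (d + 1) => p (i + k)) ∧
    IsCircumcenter (p (i + d + 1)) p i (d + 1)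

/-- Goddyn's conjecture: let `d ≥ 2` and let `p` be a periodic `d`-dimensional
iterated circumcenter sequence. Then its minimal period is exactly `2d + 4`. -/
theorem goddyn_conjecture (d : ℕ) (hd : 2 ≤ d)
    (p : ℕ → EuclideanSpace ℝ (Fin d)) (hics : IsICS d p)
    (hper : ∃ m : ℕ, 0 < m ∧ ∀ i, 1 ≤ i → p (i + m) = p i) :
    IsLeast {m : ℕ | 0 < m ∧ ∀ i, 1 ≤ i → p (i + m) = p i} (2 * d + 4) := by
  classical
  obtain ⟨m, hm, hper⟩ := hper
  set δ : ℕ → EuclideanSpace ℝ (Fin d) := fun n => p (n + 1) - p n with hδ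
  set R : ℕ → ℝ := fun i => dist (p (i + d + 1)) (p i) with hR
  have hwin : ∀ i, 1 ≤ i → AffineIndependent ℝ (fun k : Fin (d + 1) => p (i + k)) :=
    fun i hi => (hics i hi).1
  have hDR : ∀ i, 1 ≤ i → ∀ j, j ≤ d → dist (p (i + d + 1)) (p (i + j)) = R i := by
    intro i hi j hj
    obtain ⟨R', hR'⟩ := (hics i hi).2.2
    have h1 := hR' j (by omega)
    have h0 := hR' 0 (by omega)
    rw [add_zero] at h0
    rw [h1, hR, ← h0]
  have hRpos : ∀ i, 1 ≤ i → 0 < R i := by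
    intro i hi
    rcases (dist_nonneg : (0:ℝ) ≤ R i).lt_or_eq with h | h
    · exact h
    · exfalso
      have h0 := hDR i hi 0 (by omega)
      have h1 := hDR i hi 1 (by omega)
      have hz : R i = 0 := h.symm
      rw [hz, dist_eq_zero] at h0 h1
      have heq : p (i + 0) = p (i + 1) := by rw [← h0, ← h1]
      have hinj := (hwin i hi).injective
      have h2 : (⟨0, by omega⟩ : Fin (d + 1)) = ⟨1, by omega⟩ := hinj (by simpa using heq)
      have := congrArg Fin.val h2
      simp at this
  have hperk : ∀ k i, 1 ≤ i → p (i + k * m) = p i := by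
    intro k
    induction k with
    | zero => intro i _; simp
    | succ k ih =>
      intro i hi
      rw [show i + (k + 1) * m = i + k * m + m from by ring, hper _ (by omega), ih i hi]
  have hRper : ∀ k i, 1 ≤ i → R (i + k * m) = R i := by
    intro k i hi
    rw [hR]
    simp only
    rw [show i + k * m + d + 1 = (i + d + 1) + k * m from by ring, hperk k _ (by omega),
      hperk k i hi]
  have hnrm : ∀ i, 1 ≤ i → ‖δ (i + d)‖ = R i := by
    intro i hi
    have h := hDR i hi d le_rfl
    rw [hδ]
    simp only
    rw [← dist_eq_norm]
    exact h
  have hF2 : ∀ i, 1 ≤ i → ⟪δ (i + d), δ (i + d + 1)⟫ = -(R i ^ 2) / 2 := by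
    intro i hi
    have e1 : dist (p (i + d)) (p (i + d + 2)) = R (i + 1) := by
      have h := hDR (i + 1) (by omega) (d - 1) (by omega)
      rw [show i + 1 + d + 1 = i + d + 2 from by omega,
        show i + 1 + (d - 1) = i + d from by omega] at h
      rw [dist_comm]; exact h
    have e2 : dist (p (i + d)) (p (i + d + 1)) = R i := by
      have h := hDR i hi d le_rfl
      rw [dist_comm]; exact h
    have e3 : dist (p (i + d + 1)) (p (i + d + 2)) = R (i + 1) := by
      have h := hDR (i + 1) (by omega) d le_rfl
      rw [show i + 1 + d + 1 = i + d + 2 from by omega,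
        show i + 1 + d = i + d + 1 from by omega] at h
      rw [dist_comm]; exact h
    have hL : δ (i + d) = p (i + d + 1) - p (i + d) := rfl
    have hL2 : δ (i + d + 1) = p (i + d + 2) - p (i + d + 1) := rfl
    rw [hL, hL2, inner4, e1, e2, e3, dist_self]
    ring
  have hO1 : ∀ i, 1 ≤ i → ∀ s, s ≤ d - 1 →
      ⟪p (i + d + 2 + s) - p (i + d + 2), δ (i + d)⟫ = 0 := by
    intro i hi s hs
    have hL : δ (i + d) = p (i + d + 1) - p (i + d) := rfl
    rw [hL, inner4]
    have e1 : dist (p (i + d + 2)) (p (i + d + 1)) = R (i + 1) := by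
      have h := hDR (i + 1) (by omega) d le_rfl
      rw [show i + 1 + d + 1 = i + d + 2 from by omega,
        show i + 1 + d = i + d + 1 from by omega] at h
      exact h
    have e2 : dist (p (i + d + 2)) (p (i + d)) = R (i + 1) := by
      have h := hDR (i + 1) (by omega) (d - 1) (by omega)
      rw [show i + 1 + d + 1 = i + d + 2 from by omega,
        show i + 1 + (d - 1) = i + d from by omega] at h
      exact h
    have e3 : dist (p (i + d + 2 + s)) (p (i + d + 1)) = R (i + 1 + s) := by
      have h := hDR (i + 1 + s) (by omega) (d - s) (by omega)
      rw [show i + 1 + s + d + 1 = i + d + 2 + s from by omega,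
        show i + 1 + s + (d - s) = i + d + 1 from by omega] at h
      exact h
    have e4 : dist (p (i + d + 2 + s)) (p (i + d)) = R (i + 1 + s) := by
      have h := hDR (i + 1 + s) (by omega) (d - 1 - s) (by omega)
      rw [show i + 1 + s + d + 1 = i + d + 2 + s from by omega,
        show i + 1 + s + (d - 1 - s) = i + d from by omega] at h
      exact h
    rw [e1, e2, e3, e4]
    ring
  have hO2 : ∀ i, 1 ≤ i → ∀ s, s ≤ d - 1 →
      ⟪p (i + d + 2 + s) - p (i + d + 2), δ (i + 2 * d + 2)⟫ = 0 := by
    intro i hi s hs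
    have hL : δ (i + 2 * d + 2) = p (i + 2 * d + 3) - p (i + 2 * d + 2) := rfl
    rw [hL, inner4]
    have e1 : dist (p (i + d + 2)) (p (i + 2 * d + 3)) = R (i + d + 2) := by
      have h := hDR (i + d + 2) (by omega) 0 (by omega)
      rw [show i + d + 2 + d + 1 = i + 2 * d + 3 from by omega, add_zero] at h
      rw [dist_comm]; exact h
    have e2 : dist (p (i + d + 2)) (p (i + 2 * d + 2)) = R (i + d + 1) := by
      have h := hDR (i + d + 1) (by omega) 1 (by omega)
      rw [show i + d + 1 + d + 1 = i + 2 * d + 2 from by omega,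
        show i + d + 1 + 1 = i + d + 2 from by omega] at h
      rw [dist_comm]; exact h
    have e3 : dist (p (i + d + 2 + s)) (p (i + 2 * d + 3)) = R (i + d + 2) := by
      have h := hDR (i + d + 2) (by omega) s (by omega)
      rw [show i + d + 2 + d + 1 = i + 2 * d + 3 from by omega] at h
      rw [dist_comm]; exact h
    have e4 : dist (p (i + d + 2 + s)) (p (i + 2 * d + 2)) = R (i + d + 1) := by
      have h := hDR (i + d + 1) (by omega) (s + 1) (by omega)
      rw [show i + d + 1 + d + 1 = i + 2 * d + 2 from by omega,
        show i + d + 1 + (s + 1) = i + d + 2 + s from by omega] at h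
      rw [dist_comm]; exact h
    rw [e1, e2, e3, e4]
    ring
  have hprop : ∀ i, ∃ c : ℝ, 1 ≤ i → δ (i + 2 * d + 2) = c • δ (i + d) := by
    intro i
    by_cases hi : 1 ≤ i
    swap
    · exact ⟨0, fun h => absurd h hi⟩
    have haff : AffineIndependent ℝ (fun k : Fin d => p (i + d + 2 + (k : ℕ))) := by
      have h := (hwin (i + d + 2) (by omega)).comp_embedding
        (Fin.castLEEmb (show d ≤ d + 1 from by omega))
      exact h
    have hzlt : (0 : ℕ) < d := by omega
    set i1 : Fin d := ⟨0, hzlt⟩ with hi1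
    have hli := (affineIndependent_iff_linearIndependent_vsub ℝ
      (fun k : Fin d => p (i + d + 2 + (k : ℕ))) i1).mp haff
    have hli' : LinearIndependent ℝ
        (fun x : {y : Fin d // y ≠ i1} => p (i + d + 2 + ((x : Fin d) : ℕ)) - p (i + d + 2)) :=
      hli
    have hcard : Fintype.card {y : Fin d // y ≠ i1} + 1 = d := by
      have hc : Fintype.card {y : Fin d // y ≠ i1} = d - 1 := by
        simp [Fintype.card_subtype_compl]
      omega
    have hu : δ (i + d) ≠ 0 := by
      intro h0
      have hn := hnrm i hi
      rw [h0, norm_zero] at hn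
      have := hRpos i hi
      linarith
    have hou : ∀ x : {y : Fin d // y ≠ i1},
        ⟪p (i + d + 2 + ((x : Fin d) : ℕ)) - p (i + d + 2), δ (i + d)⟫ = 0 := by
      intro x
      exact hO1 i hi ((x : Fin d) : ℕ) (by have := (x : Fin d).isLt; omega)
    have how : ∀ x : {y : Fin d // y ≠ i1},
        ⟪p (i + d + 2 + ((x : Fin d) : ℕ)) - p (i + d + 2), δ (i + 2 * d + 2)⟫ = 0 := by
      intro x
      exact hO2 i hi ((x : Fin d) : ℕ) (by have := (x : Fin d).isLt; omega)
    obtain ⟨cc, hcc⟩ := exists_smul_of_orthogonal hcard _ hli' hu hou how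
    exact ⟨cc, fun _ => hcc⟩
  choose lam hlam using hprop
  have hlamsq : ∀ i, 1 ≤ i → lam i ^ 2 * R i ^ 2 = R (i + d + 2) ^ 2 := by
    intro i hi
    have h1 : ‖δ (i + 2 * d + 2)‖ = R (i + d + 2) := by
      have h := hnrm (i + d + 2) (by omega)
      rw [show i + d + 2 + d = i + 2 * d + 2 from by omega] at h
      exact h
    rw [hlam i hi, norm_smul, hnrm i hi, Real.norm_eq_abs] at h1
    calc lam i ^ 2 * R i ^ 2 = (|lam i| * R i) ^ 2 := by rw [mul_pow, sq_abs]
      _ = R (i + d + 2) ^ 2 := by rw [h1]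
  have hlamne : ∀ i, 1 ≤ i → lam i ≠ 0 := by
    intro i hi h0
    have h := hlamsq i hi
    rw [h0] at h
    have := hRpos (i + d + 2) (by omega)
    nlinarith
  have hstep : ∀ i, 1 ≤ i → lam (i + 1) = lam i := by
    intro i hi
    have hA : ⟪δ (i + 2 * d + 2), δ (i + 2 * d + 2 + 1)⟫ = -(R (i + d + 2) ^ 2) / 2 := by
      have h := hF2 (i + d + 2) (by omega)
      rw [show i + d + 2 + d = i + 2 * d + 2 from by omega] at h
      exact h
    have hB1 : δ (i + 2 * d + 2) = lam i • δ (i + d) := hlam i hi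
    have hB2 : δ (i + 2 * d + 2 + 1) = lam (i + 1) • δ (i + d + 1) := by
      have h := hlam (i + 1) (by omega)
      rw [show i + 1 + 2 * d + 2 = i + 2 * d + 2 + 1 from by omega,
        show i + 1 + d = i + d + 1 from by omega] at h
      exact h
    rw [hB1, hB2, real_inner_smul_left, real_inner_smul_right, hF2 i hi, ← hlamsq i hi] at hA
    have hR0 := hRpos i hi
    have hl0 := hlamne i hi
    have hcan : lam (i + 1) * (lam i * R i ^ 2) = lam i * (lam i * R i ^ 2) := by
      linear_combination (-2 : ℝ) * hA
    exact mul_right_cancel₀ (mul_ne_zero hl0 (pow_ne_zero 2 (ne_of_gt hR0))) hcan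
  have hconst : ∀ i, 1 ≤ i → lam i = lam 1 := by
    intro i hi
    induction i with
    | zero => omega
    | succ n ih =>
      rcases Nat.eq_zero_or_pos n with rfl | hn
      · rfl
      · rw [hstep n hn, ih hn]
  set c := lam 1 with hcdef
  have hcsq : c ^ 2 = 1 := by
    have hxpow : ∀ k : ℕ, R (1 + k * (d + 2)) ^ 2 = (c ^ 2) ^ k * R 1 ^ 2 := by
      intro k
      induction k with
      | zero => simp
      | succ k ih =>
        have h := hlamsq (1 + k * (d + 2)) (by omega)
        rw [hconst _ (by omega)] at h
        rw [show 1 + k * (d + 2) + d + 2 = 1 + (k + 1) * (d + 2) from by ring] at h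
        rw [← h, ih]
        ring
    have hpm := hxpow m
    have hRm : R (1 + m * (d + 2)) = R 1 := by
      rw [show 1 + m * (d + 2) = 1 + (d + 2) * m from by ring]
      exact hRper (d + 2) 1 le_rfl
    rw [hRm] at hpm
    have hR1 := hRpos 1 le_rfl
    have hcm : (c ^ 2) ^ m = 1 := by
      have h2 : (0 : ℝ) < R 1 ^ 2 := by positivity
      have h3 : (c ^ 2) ^ m * R 1 ^ 2 = 1 * R 1 ^ 2 := by linarith [hpm]
      exact mul_right_cancel₀ (ne_of_gt h2) h3
    rcases lt_trichotomy (c ^ 2) 1 with h | h | h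
    · exfalso
      have hlt : (c ^ 2) ^ m < 1 := pow_lt_one₀ (sq_nonneg c) h (by omega)
      rw [hcm] at hlt
      exact lt_irrefl 1 hlt
    · exact h
    · exfalso
      have hlt : 1 < (c ^ 2) ^ m := one_lt_pow₀ h (by omega)
      rw [hcm] at hlt
      exact lt_irrefl 1 hlt
  have hc1 : c = 1 ∨ c = -1 := by
    have hfac : (c - 1) * (c + 1) = 0 := by nlinarith [hcsq]
    rcases mul_eq_zero.mp hfac with h | h
    · left; linarith
    · right; linarith
  have hdel : ∀ n, d + 1 ≤ n → δ (n + (d + 2)) = c • δ n := by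
    intro n hn
    obtain ⟨i, hi1, rfl⟩ : ∃ i, 1 ≤ i ∧ n = i + d := ⟨n - d, by omega, by omega⟩
    have h := hlam i hi1
    rw [hconst i hi1] at h
    rw [show i + d + (d + 2) = i + 2 * d + 2 from by ring]
    exact h
  have hTel : ∀ n t, p (n + t) - p n = ∑ j ∈ Finset.range t, δ (n + j) := by
    intro n t
    induction t with
    | zero => simp
    | succ t ih =>
      rw [Finset.sum_range_succ, ← ih, hδ]
      simp only
      rw [show n + (t + 1) = n + t + 1 from by ring]
      abel
  have habs2 : (∀ n, d + 1 ≤ n → p (n + (d + 2)) = p n) → False := by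
    intro hp2
    have hRstep : ∀ i, d + 1 ≤ i → R (i + 1) = R i := by
      intro i hi
      have h1 : dist (p (i + d + 2)) (p (i + d + 1)) = R (i + 1) := by
        have h := hDR (i + 1) (by omega) d le_rfl
        rw [show i + 1 + d + 1 = i + d + 2 from by omega,
          show i + 1 + d = i + d + 1 from by omega] at h
        exact h
      rw [show i + d + 2 = i + (d + 2) from by omega, hp2 i hi] at h1
      have h0 := hDR i (by omega) 0 (by omega)
      rw [add_zero] at h0
      rw [dist_comm] at h1
      exact h1.symm.trans h0
    have hRconst : ∀ i, d + 1 ≤ i → R i = R (d + 1) := by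
      intro i hi
      induction i with
      | zero => omega
      | succ n ih =>
        by_cases hn : d + 1 ≤ n
        · rw [hRstep n hn, ih hn]
        · rw [show n + 1 = d + 1 from by omega]
    apply equilateral_absurd (fun j : Fin (d + 2) => p (2 * d + 3 + (j : ℕ))) (R (d + 1))
      (hRpos (d + 1) (by omega))
    intro a b hab
    show dist (p (2 * d + 3 + (a : ℕ))) (p (2 * d + 3 + (b : ℕ))) = R (d + 1)
    have ha := a.isLt
    have hb := b.isLt
    have hab' : (a : ℕ) < (b : ℕ) := hab
    have h := hDR (d + 2 + (b : ℕ)) (by omega) (d + 1 + (a : ℕ) - (b : ℕ)) (by omega)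
    rw [show d + 2 + (b : ℕ) + d + 1 = 2 * d + 3 + (b : ℕ) from by omega,
      show d + 2 + (b : ℕ) + (d + 1 + (a : ℕ) - (b : ℕ)) = 2 * d + 3 + (a : ℕ) from by omega] at h
    rw [hRconst (d + 2 + (b : ℕ)) (by omega)] at h
    rw [dist_comm] at h
    exact h
  rcases hc1 with hc1 | hc1
  · exfalso
    apply habs2
    have hδk : ∀ k n, d + 1 ≤ n → δ (n + k * (d + 2)) = δ n := by
      intro k
      induction k with
      | zero => intro n _; simp
      | succ k ih =>
        intro n hn
        rw [show n + (k + 1) * (d + 2) = (n + k * (d + 2)) + (d + 2) from by ring,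
          hdel _ (by omega), hc1, one_smul, ih n hn]
    have hblock : ∀ n, d + 1 ≤ n → ∀ k : ℕ,
        p (n + k * (d + 2)) - p n = (k : ℝ) • (p (n + (d + 2)) - p n) := by
      intro n hn k
      induction k with
      | zero => simp
      | succ k ih =>
        have e1 : p (n + (k + 1) * (d + 2)) - p (n + k * (d + 2)) = p (n + (d + 2)) - p n := by
          rw [show n + (k + 1) * (d + 2) = (n + k * (d + 2)) + (d + 2) from by ring,
            hTel (n + k * (d + 2)) (d + 2), hTel n (d + 2)]
          apply Finset.sum_congr rfl
          intro j _
          rw [show n + k * (d + 2) + j = (n + j) + k * (d + 2) from by ring, hδk k (n + j) (by omega)]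
        have e2 : p (n + (k + 1) * (d + 2)) - p n
            = (p (n + (k + 1) * (d + 2)) - p (n + k * (d + 2))) + (p (n + k * (d + 2)) - p n) := by
          abel
        rw [e2, e1, ih]
        push_cast
        rw [add_smul, one_smul]
        abel
    intro n hn
    have hb := hblock n hn m
    have hp0 : p (n + m * (d + 2)) = p n := by
      rw [show n + m * (d + 2) = n + (d + 2) * m from by ring]
      exact hperk (d + 2) n (by omega)
    rw [hp0, sub_self] at hb
    have hw : p (n + (d + 2)) - p n = 0 := by
      have hmne : (m : ℝ) ≠ 0 := Nat.cast_ne_zero.mpr (by omega)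
      rcases smul_eq_zero.mp hb.symm with h | h
      · exact absurd h hmne
      · exact h
    exact sub_eq_zero.mp hw
  · have h2d4 : ∀ n, d + 1 ≤ n → p (n + (2 * d + 4)) = p n := by
      intro n hn
      have t1 := hTel (n + (d + 2)) (d + 2)
      have t2 := hTel n (d + 2)
      rw [show n + (d + 2) + (d + 2) = n + (2 * d + 4) from by ring] at t1
      have e1 : p (n + (2 * d + 4)) - p (n + (d + 2)) = -(p (n + (d + 2)) - p n) := by
        rw [t1, t2, ← Finset.sum_neg_distrib]
        apply Finset.sum_congr rfl
        intro j _
        rw [show n + (d + 2) + j = (n + j) + (d + 2) from by ring, hdel (n + j) (by omega), hc1,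
          neg_one_smul]
      have e2 : p (n + (2 * d + 4)) - p n = 0 := by
        have e3 : p (n + (2 * d + 4)) - p n
            = (p (n + (2 * d + 4)) - p (n + (d + 2))) + (p (n + (d + 2)) - p n) := by abel
        rw [e3, e1]
        abel
      exact sub_eq_zero.mp e2
    have hmem : ∀ i, 1 ≤ i → p (i + (2 * d + 4)) = p i := by
      intro i hi
      have hdm : d ≤ d * m := Nat.le_mul_of_pos_right d hm
      have h1 : p ((i + d * m) + (2 * d + 4)) = p (i + d * m) := h2d4 _ (by omega)
      have h2 : p ((i + (2 * d + 4)) + d * m) = p (i + (2 * d + 4)) := hperk d _ (by omega)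
      rw [show (i + (2 * d + 4)) + d * m = (i + d * m) + (2 * d + 4) from by ring] at h2
      rw [← h2, h1, hperk d i hi]
    constructor
    · exact ⟨by omega, hmem⟩
    · rintro m' ⟨hm'pos, hm'per⟩
      by_contra hlt
      push_neg at hlt
      have hPmul : ∀ t, (∀ i, 1 ≤ i → p (i + t) = p i) → ∀ k i, 1 ≤ i → p (i + k * t) = p i := by
        intro t ht k
        induction k with
        | zero => intro i _; simp
        | succ k ih =>
          intro i hi
          rw [show i + (k + 1) * t = i + k * t + t from by ring, ht _ (by omega), ih i hi]
      have hPmod : ∀ a b, 0 < a → (∀ i, 1 ≤ i → p (i + a) = p i) → (∀ i, 1 ≤ i → p (i + b) = p i) →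
          (∀ i, 1 ≤ i → p (i + b % a) = p i) := by
        intro a b ha pa pb i hi
        have hmd := Nat.mod_add_div b a
        have hmc : (b / a) * a = a * (b / a) := Nat.mul_comm _ _
        have h1 : p ((i + b % a) + (b / a) * a) = p (i + b % a) := hPmul a pa (b / a) _ (by omega)
        rw [show (i + b % a) + (b / a) * a = i + b from by omega, pb i hi] at h1
        exact h1.symm
      have hgcd : ∀ a b, (∀ i, 1 ≤ i → p (i + a) = p i) → (∀ i, 1 ≤ i → p (i + b) = p i) →
          (∀ i, 1 ≤ i → p (i + Nat.gcd a b) = p i) := by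
        intro a
        induction a using Nat.strong_induction_on with
        | _ a ih =>
          intro b pa pb
          rcases Nat.eq_zero_or_pos a with rfl | hapos
          · simpa [Nat.gcd_zero_left] using pb
          · rw [Nat.gcd_rec]
            exact ih (b % a) (Nat.mod_lt b hapos) a (hPmod a b hapos pa pb) pa
      set g := Nat.gcd m' (2 * d + 4) with hg
      have hPg : ∀ i, 1 ≤ i → p (i + g) = p i := hgcd m' (2 * d + 4) hm'per hmem
      have hgdvd : g ∣ 2 * d + 4 := Nat.gcd_dvd_right _ _
      have hgpos : 0 < g := Nat.gcd_pos_of_pos_left _ hm'pos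
      have hgle : g ≤ m' := Nat.le_of_dvd hm'pos (Nat.gcd_dvd_left _ _)
      obtain ⟨k, hk⟩ := hgdvd
      have hgle2 : g ≤ d + 2 := by
        have hk2 : 2 ≤ k := by
          rcases Nat.lt_or_ge k 2 with h2 | h2
          · interval_cases k <;> omega
          · exact h2
        have : g * 2 ≤ g * k := Nat.mul_le_mul_left g hk2
        omega
      rcases Nat.lt_or_ge g (d + 1) with hcase | hcase
      · -- g ≤ d : contradicts injectivity
        have h1 : p (1 + g) = p 1 := hPg 1 le_rfl
        have hinj := (hwin 1 le_rfl).injective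
        have h2 : (⟨g, by omega⟩ : Fin (d + 1)) = ⟨0, by omega⟩ := by
          apply hinj
          simpa using h1
        have := congrArg Fin.val h2
        simp at this
        omega
      · rcases Nat.lt_or_ge g (d + 2) with hc2 | hc3
        · -- g = d + 1
          have hgeq : g = d + 1 := by omega
          have h1 : p (1 + d + 1) = p 1 := by
            have := hPg 1 le_rfl
            rw [hgeq, show 1 + (d + 1) = 1 + d + 1 from by omega] at this
            exact this
          have h0 := hDR 1 le_rfl 0 (by omega)
          rw [add_zero, h1, dist_self] at h0
          have := hRpos 1 le_rfl
          linarith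
        · -- g = d + 2
          have hgeq : g = d + 2 := by omega
          exact absurd (fun n hn => by
            have := hPg n (by omega)
            rwa [hgeq] at this) (fun h => habs2 h)
end
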